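/- arXiv:2004.09106 — 11 statements merged into one kernel-verified Lean document; each statement's English description precedes it below -/
import Mathlib

section
/- Let X ∈ ℝ^{n×p}, y ∈ ℝ^n, and ‖·‖ a norm on ℝ^p. If β̂ and β̃ both minimize b ↦ (1/2)‖y − Xb‖₂² + ‖b‖, then Xβ̂ = Xβ̃. -/
open Finset

structure IsNorm {p : ℕ} (N : (Fin p → ℝ) → ℝ) : Prop where
  nonneg : ∀ x, 0 ≤ N x
  eq_zero_iff : ∀ x, N x = 0 ↔ x = 0
  smul : ∀ (c : ℝ) (x), N (c • x) = |c| * N x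
  triangle : ∀ x y, N (x + y) ≤ N x + N y

noncomputable def obj {n p : ℕ} (X : Matrix (Fin n) (Fin p) ℝ) (N : (Fin p → ℝ) → ℝ)
    (y : Fin n → ℝ) (b : Fin p → ℝ) : ℝ :=
  (1/2) * ∑ i, (y i - X.mulVec b i)^2 + N b

theorem fitted_values_unique {n p : ℕ} (X : Matrix (Fin n) (Fin p) ℝ)
    (N : (Fin p → ℝ) → ℝ) (hN : IsNorm N) (y : Fin n → ℝ) (β₁ β₂ : Fin p → ℝ)
    (h₁ : ∀ b, obj X N y β₁ ≤ obj X N y b)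
    (h₂ : ∀ b, obj X N y β₂ ≤ obj X N y b) :
    X.mulVec β₁ = X.mulVec β₂ := by
  set a := X.mulVec β₁ with ha
  set b := X.mulVec β₂ with hb
  set m : Fin p → ℝ := (1/2 : ℝ) • (β₁ + β₂) with hm
  have hE : obj X N y β₁ = obj X N y β₂ := le_antisymm (h₁ β₂) (h₂ β₁)
  have hlin : X.mulVec m = fun i => (1/2) * (a i + b i) := by
    rw [hm, Matrix.mulVec_smul, Matrix.mulVec_add]
    funext i; simp [ha, hb, mul_comm]
  have hNm : N m ≤ (1/2) * (N β₁ + N β₂) := by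
    have h1 := hN.smul (1/2 : ℝ) (β₁ + β₂)
    have h2 := hN.triangle β₁ β₂
    rw [hm, h1]
    rw [abs_of_nonneg (by norm_num : (0:ℝ) ≤ 1/2)]
    nlinarith
  have hq : ∑ i, (y i - X.mulVec m i)^2
      = (1/2) * (∑ i, (y i - a i)^2 + ∑ i, (y i - b i)^2)
        - (1/4) * ∑ i, (a i - b i)^2 := by
    simp only [hlin]
    rw [← Finset.sum_add_distrib, Finset.mul_sum, Finset.mul_sum, ← Finset.sum_sub_distrib]
    exact Finset.sum_congr rfl (fun i _ => by ring)
  have hmin := h₁ m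
  have hD : ∑ i, (a i - b i)^2 ≤ 0 := by
    have e1 : obj X N y m = (1/2) * (∑ i, (y i - X.mulVec m i)^2) + N m := rfl
    have e2 : obj X N y β₁ = (1/2) * (∑ i, (y i - a i)^2) + N β₁ := rfl
    have e3 : obj X N y β₂ = (1/2) * (∑ i, (y i - b i)^2) + N β₂ := rfl
    rw [e1, hq] at hmin
    rw [e2] at hmin hE
    rw [e3] at hE
    nlinarith
  have hzero : ∀ i, (a i - b i)^2 = 0 := by
    intro i
    have hle : (a i - b i)^2 ≤ 0 := by
      have h := Finset.single_le_sum (f := fun i => (a i - b i)^2)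
        (fun j _ => sq_nonneg _) (Finset.mem_univ i)
      linarith
    exact le_antisymm hle (sq_nonneg _)
  funext i
  have := hzero i
  have := pow_eq_zero_iff (n := 2) (by norm_num) |>.mp this
  linarith [sub_eq_zero.mp this]
end

section
/- If ‖·‖ is a norm on ℝ^p such that ‖b + b̃‖ = ‖b‖ + ‖b̃‖ implies b = t·b̃ for some t ≥ 0 (or b̃ = 0), then for every X ∈ ℝ^{n×p} and every y ∈ ℝ^n the set of minimizers of b ↦ (1/2)‖y − Xb‖₂² + ‖b‖ is a singleton. -/
open Finset Matrix

lemma isnorm_zero {p : ℕ} {N : (Fin p → ℝ) → ℝ} (hN : IsNorm N) : N 0 = 0 :=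
  (hN.eq_zero_iff 0).mpr rfl

lemma isnorm_sum_le {p : ℕ} {N : (Fin p → ℝ) → ℝ} (hN : IsNorm N)
    {ι : Type*} (s : Finset ι) (f : ι → Fin p → ℝ) :
    N (∑ i ∈ s, f i) ≤ ∑ i ∈ s, N (f i) := by
  classical
  induction s using Finset.induction with
  | empty => simp [isnorm_zero hN]
  | insert _ _ h ih =>
    rw [Finset.sum_insert h, Finset.sum_insert h]
    exact le_trans (hN.triangle _ _) (by linarith)

lemma isnorm_le_const {p : ℕ} {N : (Fin p → ℝ) → ℝ} (hN : IsNorm N) :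
    ∃ L : ℝ, 0 ≤ L ∧ ∀ x, N x ≤ L * ‖x‖ := by
  classical
  refine ⟨∑ i, N (fun j => if i = j then (1:ℝ) else 0),
    Finset.sum_nonneg fun i _ => hN.nonneg _, fun x => ?_⟩
  calc N x = N (∑ i, x i • fun j => if i = j then (1:ℝ) else 0) := by
        rw [← pi_eq_sum_univ x]
    _ ≤ ∑ i, N (x i • fun j => if i = j then (1:ℝ) else 0) := isnorm_sum_le hN _ _
    _ ≤ ∑ i, ‖x‖ * N (fun j => if i = j then (1:ℝ) else 0) := by
        refine Finset.sum_le_sum fun i _ => ?_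
        rw [hN.smul]
        exact mul_le_mul_of_nonneg_right
          (by simpa [Real.norm_eq_abs] using norm_le_pi_norm x i) (hN.nonneg _)
    _ = (∑ i, N fun j => if i = j then (1:ℝ) else 0) * ‖x‖ := by
        rw [Finset.sum_mul]
        exact Finset.sum_congr rfl fun i _ => mul_comm _ _

lemma isnorm_continuous {p : ℕ} {N : (Fin p → ℝ) → ℝ} (hN : IsNorm N) :
    Continuous N := by
  obtain ⟨L, hL0, hL⟩ := isnorm_le_const hN
  have key : ∀ x z : Fin p → ℝ, N x - N z ≤ L * ‖x - z‖ := by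
    intro x z
    have h1 : N x ≤ N (x - z) + N z := by
      have := hN.triangle (x - z) z
      simpa using this
    have h2 := hL (x - z)
    linarith
  refine LipschitzWith.continuous (K := L.toNNReal)
    (LipschitzWith.of_dist_le_mul fun x z => ?_)
  rw [Real.dist_eq, Real.coe_toNNReal L hL0, dist_eq_norm]
  rcases abs_cases (N x - N z) with ⟨h, _⟩ | ⟨h, _⟩
  · rw [h]; exact key x z
  · rw [h]
    have := key z x
    rw [show z - x = -(x - z) by ring, norm_neg] at this
    linarith

lemma isnorm_lower {p : ℕ} (hp : 0 < p) {N : (Fin p → ℝ) → ℝ} (hN : IsNorm N) :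
    ∃ c : ℝ, 0 < c ∧ ∀ x, c * ‖x‖ ≤ N x := by
  classical
  have hx0 : ∃ x0 : Fin p → ℝ, ‖x0‖ = 1 := by
    refine ⟨Pi.single ⟨0, hp⟩ (1:ℝ), ?_⟩
    haveI : Nonempty (Fin p) := ⟨⟨0, hp⟩⟩
    simp [Pi.norm_single]
  obtain ⟨x0, hx0⟩ := hx0
  have hsph : (Metric.sphere (0 : Fin p → ℝ) 1).Nonempty :=
    ⟨x0, by simpa [mem_sphere_zero_iff_norm] using hx0⟩
  obtain ⟨z, hz, hzmin⟩ := (isCompact_sphere (0 : Fin p → ℝ) 1).exists_isMinOn hsph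
    (isnorm_continuous hN).continuousOn
  have hznorm : ‖z‖ = 1 := mem_sphere_zero_iff_norm.mp hz
  have hzne : z ≠ 0 := by
    intro h; rw [h] at hznorm; simp at hznorm
  have hc : 0 < N z := by
    rcases lt_or_eq_of_le (hN.nonneg z) with h | h
    · exact h
    · exact absurd ((hN.eq_zero_iff z).mp h.symm) hzne
  refine ⟨N z, hc, fun x => ?_⟩
  by_cases hx : x = 0
  · simp [hx, isnorm_zero hN]
  · have hr : 0 < ‖x‖ := norm_pos_iff.mpr hx
    have hunit : (‖x‖⁻¹ • x) ∈ Metric.sphere (0 : Fin p → ℝ) 1 := by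
      rw [mem_sphere_zero_iff_norm, norm_smul, norm_inv, norm_norm]
      field_simp
    have hle := isMinOn_iff.mp hzmin _ hunit
    rw [hN.smul] at hle
    rw [abs_of_nonneg (inv_nonneg.mpr hr.le)] at hle
    calc N z * ‖x‖ ≤ (‖x‖⁻¹ * N x) * ‖x‖ := by
          exact mul_le_mul_of_nonneg_right hle hr.le
      _ = N x := by field_simp

theorem strict_norm_unique_minimizer {p : ℕ} (N : (Fin p → ℝ) → ℝ) (hN : IsNorm N)
    (hstrict : ∀ b b' : Fin p → ℝ, N (b + b') = N b + N b' →
      (∃ t : ℝ, 0 ≤ t ∧ b = t • b') ∨ b' = 0) :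
    ∀ (n : ℕ) (X : Matrix (Fin n) (Fin p) ℝ) (y : Fin n → ℝ),
      ∃ β : Fin p → ℝ, {b | ∀ c, obj X N y b ≤ obj X N y c} = {β} := by
  intro n X y
  have h0 : N 0 = 0 := isnorm_zero hN
  rcases Nat.eq_zero_or_pos p with hp | hp
  · subst hp
    refine ⟨0, ?_⟩
    ext b
    have hb : b = 0 := funext fun i => Fin.elim0 i
    simp only [Set.mem_setOf_eq, Set.mem_singleton_iff]
    constructor
    · intro _; exact hb
    · intro _ c
      have hcb : c = b := funext fun i => Fin.elim0 i
      rw [hcb]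
  -- p > 0
  obtain ⟨c, hc0, hc⟩ := isnorm_lower hp hN
  set f := obj X N y with hf
  have hquadnn : ∀ b, (0:ℝ) ≤ (1/2) * ∑ i, (y i - X.mulVec b i)^2 := by
    intro b
    have : (0:ℝ) ≤ ∑ i, (y i - X.mulVec b i)^2 :=
      Finset.sum_nonneg fun i _ => sq_nonneg _
    linarith
  have hNle : ∀ b, N b ≤ f b := by
    intro b
    have := hquadnn b
    simp only [hf, obj]
    linarith
  have hfc : Continuous f := by
    have hquad : Continuous fun b : Fin p → ℝ =>
        (1/2 : ℝ) * ∑ i, (y i - X.mulVec b i)^2 := by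
      apply Continuous.mul continuous_const
      apply continuous_finset_sum
      intro i _
      apply Continuous.pow
      apply Continuous.sub continuous_const
      simp only [Matrix.mulVec, dotProduct]
      exact continuous_finset_sum _ fun j _ => continuous_const.mul (continuous_apply j)
    exact hquad.add (isnorm_continuous hN)
  have hf00 : 0 ≤ f 0 := le_trans (h0 ▸ le_refl (N 0)) (h0 ▸ hNle 0)
  set R := f 0 / c with hR
  have hR0 : 0 ≤ R := div_nonneg hf00 hc0.le
  obtain ⟨β, hβmem, hβmin⟩ := (isCompact_closedBall (0 : Fin p → ℝ) R).exists_isMinOn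
    ⟨0, Metric.mem_closedBall_self hR0⟩ hfc.continuousOn
  have hβmin' := isMinOn_iff.mp hβmin
  have hglobal : ∀ b, f β ≤ f b := by
    intro b
    by_cases hb : ‖b‖ ≤ R
    · exact hβmin' b (by simpa [Metric.mem_closedBall, dist_zero_right] using hb)
    · push_neg at hb
      have h1 : f 0 < c * ‖b‖ := by
        have := (div_lt_iff₀ hc0).mp hb
        linarith [mul_comm c ‖b‖]
      have h2 : f β ≤ f 0 := hβmin' 0 (Metric.mem_closedBall_self hR0)
      have h3 := hc b
      have h4 := hNle b
      linarith
  refine ⟨β, ?_⟩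
  ext b
  simp only [Set.mem_setOf_eq, Set.mem_singleton_iff]
  constructor
  · intro hbmin
    have hobj_eq : f b = f β := le_antisymm (hbmin β) (hglobal b)
    set m := (1/2 : ℝ) • (b + β) with hm
    have hXm : ∀ i, X.mulVec m i = (X.mulVec b i + X.mulVec β i) / 2 := by
      intro i
      rw [hm, Matrix.mulVec_smul, Matrix.mulVec_add]
      simp [Pi.smul_apply]
      ring
    set Qb := ∑ i, (y i - X.mulVec b i)^2 with hQb
    set Qβ := ∑ i, (y i - X.mulVec β i)^2 with hQβ
    set S := ∑ i, (X.mulVec b i - X.mulVec β i)^2 with hS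
    have hQm : ∑ i, (y i - X.mulVec m i)^2 = (Qb + Qβ)/2 - S/4 := by
      have hpt : ∀ i, (y i - X.mulVec m i)^2 =
          ((y i - X.mulVec b i)^2 + (y i - X.mulVec β i)^2)/2
            - (X.mulVec b i - X.mulVec β i)^2/4 := by
        intro i
        rw [hXm i]
        ring
      rw [Finset.sum_congr rfl fun i _ => hpt i, Finset.sum_sub_distrib]
      congr 1
      · rw [← Finset.sum_div, Finset.sum_add_distrib, hQb, hQβ]
      · rw [← Finset.sum_div, hS]
    have hfm : f m = (Qb + Qβ)/4 - S/8 + N m := by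
      simp only [hf, obj, hQm]
      ring
    have hNm2 : N m = N (b + β) / 2 := by
      rw [hm, hN.smul]
      rw [abs_of_nonneg (by norm_num : (0:ℝ) ≤ 1/2)]
      ring
    have hNmle : N m ≤ (N b + N β)/2 := by
      rw [hNm2]
      have := hN.triangle b β
      linarith
    have hfb : f b = (1/2) * Qb + N b := by simp only [hf, obj, hQb]
    have hfβ : f β = (1/2) * Qβ + N β := by simp only [hf, obj, hQβ]
    have hble : f b ≤ f m := hbmin m
    have hSnn : 0 ≤ S := Finset.sum_nonneg fun i _ => sq_nonneg _
    have hS0 : S = 0 := by nlinarith [hble, hfm, hfb, hfβ, hobj_eq, hNmle]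
    have hXeq : ∀ i, X.mulVec b i = X.mulVec β i := by
      intro i
      have := (Finset.sum_eq_zero_iff_of_nonneg fun i _ => sq_nonneg
        (X.mulVec b i - X.mulVec β i)).mp hS0 i (Finset.mem_univ i)
      have := pow_eq_zero_iff (n := 2) (by norm_num) |>.mp this
      linarith [sub_eq_zero.mp this]
    have hQeq : Qb = Qβ := by
      rw [hQb, hQβ]
      exact Finset.sum_congr rfl fun i _ => by rw [hXeq i]
    have hNeq : N b = N β := by
      rw [hfb, hfβ, hQeq] at hobj_eq
      linarith
    have hNadd : N (b + β) = N b + N β := by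
      have h1 : N b ≤ N m := by
        rw [hfb] at hble
        rw [hfm, hQeq] at hble
        rw [hS0] at hble
        linarith
      rw [hNm2] at h1
      have := hN.triangle b β
      linarith [hNeq]
    rcases hstrict b β hNadd with ⟨t, ht, hbt⟩ | hβ0
    · by_cases hβz : β = 0
      · rw [hβz] at hbt ⊢
        rw [hbt]; simp
      · have hNβ : N β ≠ 0 := fun h => hβz ((hN.eq_zero_iff β).mp h)
        have : |t| * N β = N β := by
          rw [← hN.smul, ← hbt, hNeq]
        have ht1 : |t| = 1 := mul_right_cancel₀ hNβ (by rw [one_mul]; exact this)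
        have ht1' : t = 1 := by rwa [abs_of_nonneg ht] at ht1
        rw [hbt, ht1', one_smul]
    · rw [hβ0] at hNeq ⊢
      rw [h0] at hNeq
      exact (hN.eq_zero_iff b).mp hNeq
  · intro hb
    rw [hb]
    exact hglobal
end

section
/- Let ‖·‖ be a norm on ℝ^p whose unit ball B is a polytope conv(V₁,…,V_k). A nonempty set F ⊆ B* is a face of the dual unit ball B* if and only if F equals the subdifferential of ‖·‖ at some point x ∈ ℝ^p. -/
open Finset Matrix

noncomputable def dot {p : ℕ} (x y : Fin p → ℝ) : ℝ := ∑ i, x i * y i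

noncomputable def dualNorm {p : ℕ} (N : (Fin p → ℝ) → ℝ) (x : Fin p → ℝ) : ℝ :=
  sSup {r | ∃ s, N s ≤ 1 ∧ r = dot s x}

def subdiff {p : ℕ} (N : (Fin p → ℝ) → ℝ) (x : Fin p → ℝ) : Set (Fin p → ℝ) :=
  {s | ∀ z, N x + dot s (z - x) ≤ N z}

/-- `F` is a face of `P`: it is the subset of `P` where some valid inequality of `P`
is attained with equality. -/
def IsFace {p : ℕ} (P F : Set (Fin p → ℝ)) : Prop :=
  ∃ (a : Fin p → ℝ) (b₀ : ℝ), (∀ x ∈ P, dot a x ≤ b₀) ∧ F = {x ∈ P | dot a x = b₀}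

/- ### Auxiliary lemmas -/

lemma dot_comm {p : ℕ} (x y : Fin p → ℝ) : dot x y = dot y x := by
  simp [dot, mul_comm]

lemma dot_zero_left {p : ℕ} (x : Fin p → ℝ) : dot 0 x = 0 := by simp [dot]

lemma dot_zero_right {p : ℕ} (x : Fin p → ℝ) : dot x 0 = 0 := by simp [dot]

lemma dot_add_left {p : ℕ} (a b x : Fin p → ℝ) : dot (a + b) x = dot a x + dot b x := by
  simp [dot, add_mul, Finset.sum_add_distrib]

lemma dot_sub_right {p : ℕ} (s x y : Fin p → ℝ) : dot s (x - y) = dot s x - dot s y := by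
  simp [dot, Pi.sub_apply, mul_sub, Finset.sum_sub_distrib]

lemma dot_smul_left {p : ℕ} (c : ℝ) (s x : Fin p → ℝ) : dot (c • s) x = c * dot s x := by
  simp [dot, Finset.mul_sum, mul_assoc]

lemma isLinearMap_dot {p : ℕ} (x : Fin p → ℝ) : IsLinearMap ℝ (fun s => dot s x) :=
  ⟨fun a b => dot_add_left a b x, fun c s => dot_smul_left c s x⟩

section Main

variable {p k : ℕ} (N : (Fin p → ℝ) → ℝ) (hN : IsNorm N)

lemma N_zero (hN : IsNorm N) : N 0 = 0 := (hN.eq_zero_iff 0).2 rfl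

variable (V : Fin k → (Fin p → ℝ)) (hB : {x | N x ≤ 1} = convexHull ℝ (Set.range V))

lemma bddAbove_dualSet (hB : {x | N x ≤ 1} = convexHull ℝ (Set.range V)) (x : Fin p → ℝ) :
    BddAbove {r | ∃ s, N s ≤ 1 ∧ r = dot s x} := by
  have hset : {r | ∃ s, N s ≤ 1 ∧ r = dot s x} = (fun s => dot s x) '' {s | N s ≤ 1} := by
    ext r
    simp [Set.mem_image, eq_comm, Set.mem_setOf_eq]
  rw [hset, hB, (isLinearMap_dot x).image_convexHull]
  have hfin : ((fun s => dot s x) '' Set.range V).Finite :=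
    (Set.finite_range V).image _
  obtain ⟨c, hc⟩ := hfin.bddAbove
  refine ⟨c, fun r hr => ?_⟩
  have : convexHull ℝ ((fun s => dot s x) '' Set.range V) ⊆ Set.Iic c :=
    convexHull_min (fun y hy => hc hy) (convex_Iic c)
  exact this hr

lemma dualSet_nonempty (hN : IsNorm N) (x : Fin p → ℝ) :
    {r | ∃ s, N s ≤ 1 ∧ r = dot s x}.Nonempty :=
  ⟨0, 0, by simp [N_zero N hN], (dot_zero_left x).symm⟩

lemma le_dualNorm (hN : IsNorm N) (hB : {x | N x ≤ 1} = convexHull ℝ (Set.range V))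
    {s x : Fin p → ℝ} (hs : N s ≤ 1) : dot s x ≤ dualNorm N x :=
  le_csSup (bddAbove_dualSet N V hB x) ⟨s, hs, rfl⟩

lemma dualNorm_le (hN : IsNorm N) {x : Fin p → ℝ} {b : ℝ}
    (h : ∀ s, N s ≤ 1 → dot s x ≤ b) : dualNorm N x ≤ b := by
  refine csSup_le (dualSet_nonempty N hN x) ?_
  rintro r ⟨s, hs, rfl⟩
  exact h s hs

lemma dualNorm_le_one_iff (hN : IsNorm N) (hB : {x | N x ≤ 1} = convexHull ℝ (Set.range V))
    (s : Fin p → ℝ) : dualNorm N s ≤ 1 ↔ ∀ z, dot s z ≤ N z := by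
  constructor
  · intro h z
    rcases eq_or_ne z 0 with rfl | hz
    · simp [dot_zero_right, N_zero N hN]
    · have hNz : 0 < N z := lt_of_le_of_ne (hN.nonneg z) (Ne.symm (mt (hN.eq_zero_iff z).1 hz))
      have hy : N ((N z)⁻¹ • z) ≤ 1 := by
        rw [hN.smul, abs_of_nonneg (inv_nonneg.2 hNz.le), inv_mul_cancel₀ hNz.ne']
      have := le_dualNorm N V hN hB (x := s) hy
      rw [dot_smul_left] at this
      have h2 : (N z)⁻¹ * dot z s ≤ 1 := this.trans h
      have := (inv_mul_le_iff₀ hNz).1 h2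
      rw [dot_comm s z]
      linarith
  · intro h
    refine dualNorm_le N hN fun y hy => ?_
    calc dot y s = dot s y := dot_comm y s
    _ ≤ N y := h y
    _ ≤ 1 := hy

lemma mem_subdiff_iff (hN : IsNorm N) (hB : {x | N x ≤ 1} = convexHull ℝ (Set.range V))
    (x s : Fin p → ℝ) :
    s ∈ subdiff N x ↔ dualNorm N s ≤ 1 ∧ dot s x = N x := by
  constructor
  · intro h
    have h1 : ∀ w, dot s w ≤ N w := by
      intro w
      have h2 := h (x + w)
      have h3 : dot s (x + w - x) = dot s w := by rw [add_sub_cancel_left]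
      rw [h3] at h2
      have h4 := hN.triangle x w
      linarith
    have h0 := h 0
    rw [dot_sub_right, dot_zero_right, N_zero N hN] at h0
    have h5 : N x ≤ dot s x := by linarith
    exact ⟨(dualNorm_le_one_iff N V hN hB s).2 h1, le_antisymm (h1 x) h5⟩
  · rintro ⟨hd, he⟩ z
    have := (dualNorm_le_one_iff N V hN hB s).1 hd z
    rw [dot_sub_right, he]
    linarith

end Main

/-- A type synonym for `Fin p → ℝ` on which we can install a custom norm. -/
def Syn (p : ℕ) : Type := Fin p → ℝ

instance (p : ℕ) : AddCommGroup (Syn p) := inferInstanceAs (AddCommGroup (Fin p → ℝ))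
noncomputable instance (p : ℕ) : Module ℝ (Syn p) := inferInstanceAs (Module ℝ (Fin p → ℝ))

lemma exists_support {p : ℕ} (N : (Fin p → ℝ) → ℝ) (hN : IsNorm N) (a : Fin p → ℝ) :
    ∃ s, (∀ z, dot s z ≤ N z) ∧ dot s a = N a := by
  rcases eq_or_ne a 0 with rfl | ha
  · exact ⟨0, fun z => by rw [dot_zero_left]; exact hN.nonneg z,
      by rw [dot_zero_left, N_zero N hN]⟩
  · letI : Norm (Syn p) := ⟨fun x => N x⟩
    have core : NormedSpace.Core ℝ (Syn p) :=
      { norm_nonneg := hN.nonneg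
        norm_smul := fun c x => by
          rw [Real.norm_eq_abs]; exact hN.smul c x
        norm_triangle := hN.triangle
        norm_eq_zero_iff := hN.eq_zero_iff }
    letI : NormedAddCommGroup (Syn p) := NormedAddCommGroup.ofCore core
    letI : NormedSpace ℝ (Syn p) := NormedSpace.ofCore core
    obtain ⟨g, hg1, hg2⟩ := exists_dual_vector ℝ (E := Syn p) a (show N a ≠ 0 from mt (hN.eq_zero_iff a).1 ha)
    let f : (Fin p → ℝ) →ₗ[ℝ] ℝ :=
      { toFun := fun z => g z
        map_add' := fun x y => g.map_add x y
        map_smul' := fun c x => g.map_smul c x }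
    set s : Fin p → ℝ := fun i => f (fun j => if i = j then 1 else 0) with hs
    have hrep : ∀ z : Fin p → ℝ, dot s z = f z := by
      intro z
      rw [f.pi_apply_eq_sum_univ z]
      simp only [dot, smul_eq_mul]
      exact Finset.sum_congr rfl fun i _ => mul_comm _ _
    have hfg : ∀ z : Fin p → ℝ, f z = g z := fun z => rfl
    refine ⟨s, fun z => ?_, ?_⟩
    · rw [hrep z, hfg z]
      have h1 := g.le_opNorm (show Syn p from z)
      rw [hg1, one_mul, Real.norm_eq_abs] at h1
      have h1' : |g z| ≤ N z := h1
      have h2 : g z ≤ |g z| := le_abs_self _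
      linarith
    · rw [hrep a, hfg a, hg2]
      rfl

theorem face_iff_subdifferential {p k : ℕ} (N : (Fin p → ℝ) → ℝ) (hN : IsNorm N)
    (V : Fin k → (Fin p → ℝ))
    (hB : {x | N x ≤ 1} = convexHull ℝ (Set.range V))
    (F : Set (Fin p → ℝ)) (hF : F.Nonempty) (hFsub : F ⊆ {s | dualNorm N s ≤ 1}) :
    IsFace {s | dualNorm N s ≤ 1} F ↔ ∃ x : Fin p → ℝ, F = subdiff N x := by
  constructor
  · rintro ⟨a, b₀, hvalid, hFeq⟩
    obtain ⟨s₀, hs₀⟩ := hF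
    rw [hFeq] at hs₀
    obtain ⟨hs₀B, hs₀eq⟩ := hs₀
    have h1 : b₀ ≤ N a := by
      have := ((dualNorm_le_one_iff N V hN hB s₀).1 hs₀B) a
      rw [← hs₀eq, dot_comm a s₀]
      exact this
    obtain ⟨t, ht1, ht2⟩ := exists_support N hN a
    have htB : dualNorm N t ≤ 1 := (dualNorm_le_one_iff N V hN hB t).2 ht1
    have h2 : N a ≤ b₀ := by
      have := hvalid t htB
      rw [dot_comm a t, ht2] at this
      exact this
    have hb : b₀ = N a := le_antisymm h1 h2
    refine ⟨a, ?_⟩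
    rw [hFeq]
    ext s
    rw [Set.mem_setOf_eq, mem_subdiff_iff N V hN hB a s, hb, dot_comm a s]
    exact Iff.rfl
  · rintro ⟨x, rfl⟩
    refine ⟨x, N x, ?_, ?_⟩
    · intro s hs
      rw [dot_comm x s]
      exact ((dualNorm_le_one_iff N V hN hB s).1 hs) x
    · ext s
      rw [mem_subdiff_iff N V hN hB x s, Set.mem_setOf_eq, dot_comm x s]
      exact Iff.rfl
end

section
/- Let X ∈ ℝ^{n×p}, y ∈ col(X), and suppose Xβ̂ = y. Then β̂ is a basis pursuit minimizer (minimizing ‖b‖₁ subject to Xb = y) if and only if there exists z ∈ ℝ^n with ‖X'z‖_∞ ≤ 1 and X_j'z = sign(β̂_j) for all j in the support of β̂. -/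
open Finset Matrix

lemma sign_mul_self_abs (x : ℝ) : x * Real.sign x = |x| := by
  rcases lt_trichotomy x 0 with h | h | h
  · rw [Real.sign_of_neg h, abs_of_neg h]; ring
  · simp [h]
  · rw [Real.sign_of_pos h, abs_of_pos h]; ring

lemma abs_add_small (b v t : ℝ) (ht : 0 < t) (hle : b = 0 ∨ t * |v| ≤ |b|) :
    |b + t * v| = |b| + t * (Real.sign b * v + if b = 0 then |v| else 0) := by
  rcases lt_trichotomy b 0 with h | h | h
  · have hb : t * |v| ≤ |b| := hle.resolve_left h.ne
    rw [abs_of_neg h] at hb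
    have h1 : b + t * v ≤ 0 := by
      have : t * v ≤ t * |v| := by nlinarith [le_abs_self v]
      linarith
    rw [abs_of_nonpos h1, Real.sign_of_neg h, abs_of_neg h, if_neg h.ne]; ring
  · subst h
    rw [zero_add, abs_mul, abs_of_pos ht]
    simp
  · have hb : t * |v| ≤ |b| := hle.resolve_left h.ne'
    rw [abs_of_pos h] at hb
    have h1 : 0 ≤ b + t * v := by
      have : -(t * v) ≤ t * |v| := by nlinarith [neg_abs_le v]
      linarith
    rw [abs_of_nonneg h1, Real.sign_of_pos h, abs_of_pos h, if_neg h.ne']; ring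

lemma factor_through {n p : ℕ} (A : (Fin p → ℝ) →ₗ[ℝ] (Fin n → ℝ))
    (φ : (Fin p → ℝ) →ₗ[ℝ] ℝ) (hker : LinearMap.ker A ≤ LinearMap.ker φ) :
    ∃ ψ : (Fin n → ℝ) →ₗ[ℝ] ℝ, ∀ b, ψ (A b) = φ b := by
  obtain ⟨ψ, hψ⟩ := LinearMap.exists_extend
    (((LinearMap.ker A).liftQ φ hker).comp A.quotKerEquivRange.symm.toLinearMap)
  refine ⟨ψ, fun b => ?_⟩
  have hmem : A b ∈ LinearMap.range A := ⟨b, rfl⟩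
  have := LinearMap.congr_fun hψ ⟨A b, hmem⟩
  simp only [LinearMap.comp_apply, Submodule.subtype_apply, LinearEquiv.coe_coe] at this
  rw [this, LinearMap.quotKerEquivRange_symm_apply_image]
  simp [Submodule.mkQ_apply, Submodule.liftQ_apply]

noncomputable def l1norm {p : ℕ} (b : Fin p → ℝ) : ℝ := ∑ i, |b i|

def IsBPSol {n p : ℕ} (X : Matrix (Fin n) (Fin p) ℝ) (y : Fin n → ℝ) (b : Fin p → ℝ) : Prop :=
  X.mulVec b = y ∧ ∀ c : Fin p → ℝ, X.mulVec c = y → l1norm b ≤ l1norm c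

theorem bp_characterization {n p : ℕ} (X : Matrix (Fin n) (Fin p) ℝ)
    (y : Fin n → ℝ) (β : Fin p → ℝ) (hfeas : X.mulVec β = y) :
    IsBPSol X y β ↔
      ∃ z : Fin n → ℝ, (∀ j, |∑ i, X i j * z i| ≤ 1) ∧
        ∀ j, β j ≠ 0 → ∑ i, X i j * z i = Real.sign (β j) := by
  constructor
  · rintro ⟨-, hmin⟩
    set A : (Fin p → ℝ) →ₗ[ℝ] (Fin n → ℝ) := X.mulVecLin with hA
    -- directional derivative nonnegativity
    have hD : ∀ v ∈ LinearMap.ker A,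
        0 ≤ ∑ j, (Real.sign (β j) * v j + if β j = 0 then |v j| else 0) := by
      intro v hv
      set T : Finset ℝ :=
        insert 1 (Finset.univ.image fun j => if β j = 0 then (1:ℝ) else |β j| / (|v j| + 1)) with hT
      have hTne : T.Nonempty := ⟨1, Finset.mem_insert_self _ _⟩
      set t := T.min' hTne with htdef
      have hpos : ∀ x ∈ T, 0 < x := by
        intro x hx
        rw [hT, Finset.mem_insert] at hx
        rcases hx with h | h
        · rw [h]; norm_num
        · obtain ⟨j, -, hj⟩ := Finset.mem_image.mp h
          rw [← hj]
          split_ifs with h0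
          · norm_num
          · positivity
      have ht : 0 < t := hpos _ (T.min'_mem hTne)
      have hsmall : ∀ j, β j = 0 ∨ t * |v j| ≤ |β j| := by
        intro j
        by_cases h0 : β j = 0
        · exact Or.inl h0
        · right
          have hmem : (|β j| / (|v j| + 1)) ∈ T := by
            rw [hT]
            refine Finset.mem_insert_of_mem (Finset.mem_image.mpr ⟨j, Finset.mem_univ _, ?_⟩)
            rw [if_neg h0]
          have h1 : t ≤ |β j| / (|v j| + 1) := T.min'_le _ hmem
          have h2 : (0:ℝ) < |v j| + 1 := by positivity
          have h3 : t * (|v j| + 1) ≤ |β j| := (le_div_iff₀ h2).mp h1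
          nlinarith [abs_nonneg (v j)]
      set c : Fin p → ℝ := fun j => β j + t * v j with hc
      have hcfeas : X.mulVec c = y := by
        have hv0 : X.mulVec v = 0 := hv
        have : c = β + t • v := by funext j; simp [hc, smul_eq_mul]
        rw [this, Matrix.mulVec_add, Matrix.mulVec_smul, hv0, hfeas, smul_zero, add_zero]
      have hl1 : l1norm c = l1norm β
          + t * ∑ j, (Real.sign (β j) * v j + if β j = 0 then |v j| else 0) := by
        unfold l1norm
        rw [Finset.mul_sum, ← Finset.sum_add_distrib]
        exact Finset.sum_congr rfl fun j _ => abs_add_small (β j) (v j) t ht (hsmall j)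
      have := hmin c hcfeas
      rw [hl1] at this
      nlinarith
    -- Hahn-Banach extension
    set L : (Fin p → ℝ) →ₗ[ℝ] ℝ := -(∑ j, Real.sign (β j) • LinearMap.proj j) with hL
    have hLapp : ∀ v, L v = -∑ j, Real.sign (β j) * v j := by
      intro v
      simp [hL, LinearMap.sum_apply, smul_eq_mul]
    set N : (Fin p → ℝ) → ℝ := fun v => ∑ j, if β j = 0 then |v j| else 0 with hNdef
    have N_hom : ∀ c : ℝ, 0 < c → ∀ x, N (c • x) = c * N x := by
      intro c hc x
      rw [hNdef]
      simp only [Pi.smul_apply, smul_eq_mul, Finset.mul_sum]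
      refine Finset.sum_congr rfl fun j _ => ?_
      split_ifs
      · rw [abs_mul, abs_of_pos hc]
      · ring
    have N_add : ∀ x y, N (x + y) ≤ N x + N y := by
      intro x y
      rw [hNdef]
      simp only [Pi.add_apply]
      rw [← Finset.sum_add_distrib]
      refine Finset.sum_le_sum fun j _ => ?_
      split_ifs
      · exact abs_add_le _ _
      · norm_num
    obtain ⟨g, hg_eq, hg_le⟩ := exists_extension_of_le_sublinear
      (L.toPMap (LinearMap.ker A)) N N_hom N_add (by
        rintro ⟨x, hx⟩
        change L x ≤ N x
        rw [hLapp]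
        have := hD x hx
        rw [Finset.sum_add_distrib] at this
        rw [hNdef]
        linarith)
    set sel : Fin p → (Fin p → ℝ) := fun j k => if j = k then 1 else 0 with hsel
    have hNsel : ∀ (a : ℝ) j, N (a • sel j) = if β j = 0 then |a| else 0 := by
      intro a j
      show (∑ k : Fin p, if β k = 0 then |(a • sel j) k| else 0) = if β j = 0 then |a| else 0
      rw [Finset.sum_eq_single j]
      · simp [hsel]
      · intro k _ hk
        simp [hsel, Ne.symm hk]
      · simp
    set G : Fin p → ℝ := fun j => g (sel j) with hG
    have hNs : ∀ j, N (sel j) = if β j = 0 then 1 else 0 := by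
      intro j
      have := hNsel 1 j
      rwa [one_smul, abs_one] at this
    have hGub : ∀ j, G j ≤ if β j = 0 then 1 else 0 := by
      intro j
      have := hg_le (sel j)
      rwa [hNs j] at this
    have hGlb : ∀ j, -G j ≤ if β j = 0 then 1 else 0 := by
      intro j
      have h1 := hg_le (-sel j)
      have hNn : N (-sel j) = if β j = 0 then 1 else 0 := by
        have := hNsel (-1) j
        rwa [neg_one_smul, abs_neg, abs_one] at this
      rw [map_neg, hNn] at h1
      exact h1
    have hGzero : ∀ j, β j ≠ 0 → G j = 0 := by
      intro j hj
      have h1 := hGub j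
      have h2 := hGlb j
      rw [if_neg hj] at h1 h2
      linarith
    have hGbd : ∀ j, β j = 0 → |G j| ≤ 1 := by
      intro j hj
      have h1 := hGub j
      have h2 := hGlb j
      rw [if_pos hj] at h1 h2
      rw [abs_le]; constructor <;> linarith
    set κ : Fin p → ℝ := fun j => Real.sign (β j) + G j with hκ
    have hκbd : ∀ j, |κ j| ≤ 1 := by
      intro j
      by_cases hj : β j = 0
      · simp only [hκ, hj, Real.sign_zero, zero_add]
        exact hGbd j hj
      · simp only [hκ]
        rw [hGzero j hj, add_zero]
        rcases Real.sign_apply_eq_of_ne_zero (β j) hj with h | h <;> simp [h]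
    have hκsgn : ∀ j, β j ≠ 0 → κ j = Real.sign (β j) := by
      intro j hj
      simp only [hκ]
      rw [hGzero j hj, add_zero]
    -- κ annihilates ker A
    set φ : (Fin p → ℝ) →ₗ[ℝ] ℝ := ∑ j, κ j • LinearMap.proj j with hφ
    have hφapp : ∀ v, φ v = ∑ j, κ j * v j := by
      intro v
      simp [hφ, LinearMap.sum_apply, smul_eq_mul]
    have hgsum : ∀ v, g v = ∑ j, v j * G j := by
      intro v
      rw [LinearMap.pi_apply_eq_sum_univ g v]
      exact Finset.sum_congr rfl fun j _ => by rw [smul_eq_mul]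
    have hkerφ : LinearMap.ker A ≤ LinearMap.ker φ := by
      intro v hv
      have h1 : g v = L v := hg_eq ⟨v, hv⟩
      rw [hLapp] at h1
      rw [LinearMap.mem_ker, hφapp]
      have : ∑ j, κ j * v j = (∑ j, Real.sign (β j) * v j) + g v := by
        rw [hgsum, ← Finset.sum_add_distrib]
        exact Finset.sum_congr rfl fun j _ => by rw [hκ]; ring
      rw [this, h1]; ring
    obtain ⟨ψ, hψ⟩ := factor_through A φ hkerφ
    set z : Fin n → ℝ := fun i => ψ fun k => if i = k then 1 else 0 with hz
    have key : ∀ j, ∑ i, X i j * z i = κ j := by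
      intro j
      have h1 : ∀ i, (A (sel j)) i = X i j := by
        intro i
        simp only [hA, Matrix.mulVecLin_apply, Matrix.mulVec, dotProduct, hsel]
        rw [Finset.sum_eq_single j]
        · simp
        · intro k _ hk
          simp [Ne.symm hk]
        · simp
      have h2 : ψ (A (sel j)) = ∑ i, (A (sel j)) i * z i := by
        rw [LinearMap.pi_apply_eq_sum_univ ψ]
        exact Finset.sum_congr rfl fun i _ => by rw [smul_eq_mul]
      have h3 : φ (sel j) = κ j := by
        rw [hφapp]
        rw [Finset.sum_eq_single j]
        · simp [hsel]
        · intro k _ hk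
          simp [hsel, Ne.symm hk]
        · simp
      calc ∑ i, X i j * z i = ∑ i, (A (sel j)) i * z i :=
            Finset.sum_congr rfl fun i _ => by rw [h1]
        _ = ψ (A (sel j)) := h2.symm
        _ = φ (sel j) := hψ _
        _ = κ j := h3
    exact ⟨z, fun j => (key j) ▸ hκbd j, fun j hj => (key j) ▸ hκsgn j hj⟩
  · rintro ⟨z, hbd, hsgn⟩
    refine ⟨hfeas, fun c hc => ?_⟩
    have swap : ∀ b : Fin p → ℝ, X.mulVec b = y →
        ∑ j, b j * (∑ i, X i j * z i) = ∑ i, y i * z i := by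
      intro b hb
      have h1 : ∀ i, y i = ∑ j, X i j * b j := by
        intro i
        rw [← hb]
        simp [Matrix.mulVec, dotProduct]
      calc ∑ j, b j * (∑ i, X i j * z i)
          = ∑ j, ∑ i, X i j * b j * z i := by
            refine Finset.sum_congr rfl fun j _ => ?_
            rw [Finset.mul_sum]
            exact Finset.sum_congr rfl fun i _ => by ring
        _ = ∑ i, ∑ j, X i j * b j * z i := Finset.sum_comm
        _ = ∑ i, y i * z i := by
            refine Finset.sum_congr rfl fun i _ => ?_
            rw [h1 i, Finset.sum_mul]
    have hb1 : l1norm β = ∑ j, β j * (∑ i, X i j * z i) := by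
      unfold l1norm
      refine Finset.sum_congr rfl fun j _ => ?_
      by_cases hj : β j = 0
      · simp [hj]
      · rw [hsgn j hj, sign_mul_self_abs]
    have hc1 : ∑ j, c j * (∑ i, X i j * z i) ≤ l1norm c := by
      unfold l1norm
      refine Finset.sum_le_sum fun j _ => ?_
      calc c j * (∑ i, X i j * z i) ≤ |c j * (∑ i, X i j * z i)| := le_abs_self _
        _ = |c j| * |∑ i, X i j * z i| := abs_mul _ _
        _ ≤ |c j| * 1 := mul_le_mul_of_nonneg_left (hbd j) (abs_nonneg _)
        _ = |c j| := mul_one _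
    rw [hb1, swap β hfeas, ← swap c hc]
    exact hc1
end

section
/- Let X ∈ ℝ^{n×p} and y ∈ col(X). If β̂ and β̃ are both basis pursuit minimizers for y, then β̂_j β̃_j ≥ 0 for every j ∈ [p]. -/
open Finset Matrix

theorem bp_minimizers_sign_agree {n p : ℕ} (X : Matrix (Fin n) (Fin p) ℝ)
    (y : Fin n → ℝ) (hy : ∃ b, X.mulVec b = y) (β₁ β₂ : Fin p → ℝ)
    (h₁ : IsBPSol X y β₁) (h₂ : IsBPSol X y β₂) :
    ∀ j, 0 ≤ β₁ j * β₂ j := by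
  intro j
  set m : Fin p → ℝ := fun i => (β₁ i + β₂ i) / 2 with hm
  have hmeq : m = (2⁻¹ : ℝ) • (β₁ + β₂) := by
    funext i; simp [hm]; ring
  have hfeas : X.mulVec m = y := by
    rw [hmeq, Matrix.mulVec_smul, Matrix.mulVec_add, h₁.1, h₂.1]
    funext i; simp; ring
  have hL : l1norm β₁ = l1norm β₂ := le_antisymm (h₁.2 β₂ h₂.1) (h₂.2 β₁ h₁.1)
  have hle : ∀ i ∈ Finset.univ, |m i| ≤ (|β₁ i| + |β₂ i|) / 2 := by
    intro i _
    have := abs_add_le (β₁ i) (β₂ i)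
    simp only [hm]
    rw [abs_div, abs_of_pos (by norm_num : (0:ℝ) < 2)]
    linarith
  have hsum : ∑ i, |m i| = ∑ i, (|β₁ i| + |β₂ i|) / 2 := by
    have h1 : l1norm β₁ ≤ l1norm m := h₁.2 m hfeas
    have h2 : ∑ i, (|β₁ i| + |β₂ i|) / 2 = ∑ i, |β₁ i| := by
      simp only [l1norm] at hL
      rw [← Finset.sum_div, Finset.sum_add_distrib, ← hL]; ring
    have h3 : ∑ i, |m i| ≤ ∑ i, (|β₁ i| + |β₂ i|) / 2 := Finset.sum_le_sum hle
    simp only [l1norm] at h1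
    linarith
  have heq := (Finset.sum_eq_sum_iff_of_le hle).mp hsum j (Finset.mem_univ j)
  have habs : |β₁ j + β₂ j| = |β₁ j| + |β₂ j| := by
    simp only [hm] at heq
    rw [abs_div, abs_of_pos (by norm_num : (0:ℝ) < 2)] at heq
    linarith
  rcases abs_cases (β₁ j) with ⟨e1, s1⟩ | ⟨e1, s1⟩ <;>
    rcases abs_cases (β₂ j) with ⟨e2, s2⟩ | ⟨e2, s2⟩ <;>
    rcases abs_cases (β₁ j + β₂ j) with ⟨e3, s3⟩ | ⟨e3, s3⟩ <;>
    rw [e1, e2, e3] at habs <;>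
    nlinarith [habs, s1, s2, s3]
end

section
/- Let X ∈ ℝ^{n×p}. There exists y ∈ col(X) for which the basis pursuit problem argmin{‖b‖₁ : Xb = y} has more than one minimizer if and only if the row space of X intersects a face of the unit cube [−1,1]^p whose codimension is larger than rk(X). -/
open Finset Matrix

/-- The face of the cube `[-1,1]^p` associated to a sign vector `σ ∈ {-1,0,1}^p`:
coordinates with `σ j ≠ 0` are fixed to `σ j`, the others range over `[-1,1]`. -/
def cubeFace {p : ℕ} (σ : Fin p → ℝ) : Set (Fin p → ℝ) :=
  {x | ∀ j, |x j| ≤ 1 ∧ (σ j ≠ 0 → x j = σ j)}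

section Aux

variable {n p : ℕ}

lemma dotlem (X : Matrix (Fin n) (Fin p) ℝ) (z : Fin n → ℝ) (c : Fin p → ℝ) :
    ∑ j, (Xᵀ.mulVec z) j * c j = z ⬝ᵥ (X.mulVec c) := by
  rw [Matrix.mulVec_transpose, Matrix.dotProduct_mulVec]; rfl

lemma exists_ker (X : Matrix (Fin n) (Fin p) ℝ) (S : Finset (Fin p)) (hS : X.rank < S.card) :
    ∃ h : Fin p → ℝ, h ≠ 0 ∧ X.mulVec h = 0 ∧ ∀ j, h j ≠ 0 → j ∈ S := by
  classical
  set g : {j // j ∈ S} → (Fin n → ℝ) := fun j => Xᵀ (j : Fin p) with hg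
  have hnotli : ¬ LinearIndependent ℝ g := by
    intro hli
    have h1 : Module.finrank ℝ (Submodule.span ℝ (Set.range g)) = Fintype.card {j // j ∈ S} :=
      finrank_span_eq_card hli
    have h2 : Submodule.span ℝ (Set.range g) ≤ LinearMap.range X.mulVecLin := by
      rw [Matrix.range_mulVecLin]
      refine Submodule.span_mono ?_
      rintro _ ⟨j, rfl⟩
      exact ⟨(j : Fin p), rfl⟩
    have h3 : Module.finrank ℝ (Submodule.span ℝ (Set.range g)) ≤ X.rank :=
      Submodule.finrank_mono h2
    rw [h1, Fintype.card_coe] at h3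
    omega
  obtain ⟨c, hc0, j₀, hj₀⟩ := Fintype.not_linearIndependent_iff.mp hnotli
  refine ⟨fun j => if hj : j ∈ S then c ⟨j, hj⟩ else 0, ?_, ?_, ?_⟩
  · intro hzero
    apply hj₀
    have := congrFun hzero (j₀ : Fin p)
    simpa [j₀.2] using this
  · funext i
    have := congrFun hc0 i
    simp only [Finset.sum_apply, Pi.smul_apply, Pi.zero_apply, smul_eq_mul] at this
    show ∑ j, X i j * _ = 0
    rw [← Finset.sum_subset (Finset.subset_univ S) (by intro x _ hx; simp [hx])]
    rw [← Finset.sum_attach S (fun j => X i j * if hj : j ∈ S then c ⟨j, hj⟩ else 0)]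
    rw [← this]
    refine Finset.sum_congr (Finset.univ_eq_attach S).symm fun j _ => ?_
    simp [g, mul_comm, Matrix.transpose_apply]
  · intro j hj
    by_contra hjS
    simp [hjS] at hj

lemma exists_certificate (X : Matrix (Fin n) (Fin p) ℝ) (y : Fin n → ℝ) (b : Fin p → ℝ)
    (hb : IsBPSol X y b) :
    ∃ z : Fin n → ℝ, (∀ j, |Xᵀ.mulVec z j| ≤ 1) ∧ ∀ j, b j ≠ 0 → |Xᵀ.mulVec z j| = 1 := by
  classical
  by_contra hno
  push_neg at hno
  set sgn : Fin p → ℝ := fun j => if 0 < b j then 1 else -1 with hsgn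
  have hsgnabs : ∀ j, |sgn j| = 1 := by
    intro j; rw [hsgn]; dsimp only; split <;> norm_num
  set C : Set (Fin p → ℝ) :=
    Set.univ.pi (fun j => if b j = 0 then Set.Icc (-1 : ℝ) 1 else {sgn j}) with hC
  have hCconv : Convex ℝ C := convex_pi fun j _ => by
    by_cases hbj : b j = 0
    · rw [if_pos hbj]; exact convex_Icc _ _
    · rw [if_neg hbj]; exact convex_singleton _
  have hCcpt : IsCompact C := isCompact_univ_pi fun j => by
    by_cases hbj : b j = 0
    · rw [if_pos hbj]; exact isCompact_Icc
    · rw [if_neg hbj]; exact isCompact_singleton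
  set Row := LinearMap.range Xᵀ.mulVecLin with hRow
  have hmemRow : ∀ z : Fin n → ℝ, Xᵀ.mulVec z ∈ Row := fun z => ⟨z, rfl⟩
  have hdisj : Disjoint C (Row : Set (Fin p → ℝ)) := by
    rw [Set.disjoint_left]
    rintro v hvC ⟨z, hz⟩
    rw [Matrix.mulVecLin_apply] at hz
    have hbound : ∀ j, |Xᵀ.mulVec z j| ≤ 1 := by
      intro j
      have hj := hvC j (Set.mem_univ j)
      rw [show Xᵀ.mulVec z j = v j from congrFun hz j]
      by_cases hbj : b j = 0
      · simp only [hbj, if_true] at hj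
        rw [abs_le]; exact ⟨hj.1, hj.2⟩
      · simp only [hbj, if_neg hbj] at hj
        rw [Set.mem_singleton_iff.mp hj, hsgnabs]
    obtain ⟨j, hbj, hne⟩ := hno z hbound
    have hj := hvC j (Set.mem_univ j)
    simp only [if_neg hbj] at hj
    apply hne
    rw [show Xᵀ.mulVec z j = v j from congrFun hz j, Set.mem_singleton_iff.mp hj, hsgnabs]
  obtain ⟨f, u, s, hfC, hus, hfRow⟩ :=
    geometric_hahn_banach_compact_closed hCconv hCcpt Row.convex
      Row.closed_of_finiteDimensional hdisj
  have hs0 : s < 0 := by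
    have := hfRow 0 (Submodule.zero_mem Row)
    rwa [map_zero] at this
  have hf0 : ∀ w ∈ Row, f w = 0 := by
    intro w hw
    by_contra hfw
    have hmem : ((s - 1) / f w) • w ∈ Row := Submodule.smul_mem _ _ hw
    have := hfRow _ hmem
    rw [_root_.map_smul, smul_eq_mul, div_mul_cancel₀ _ hfw] at this
    linarith
  set h' : Fin p → ℝ := fun j => f (Pi.single j 1) with hh'
  have hfrepr : ∀ x : Fin p → ℝ, f x = ∑ j, x j * h' j := by
    intro x
    conv_lhs => rw [← Finset.univ_sum_single x]
    rw [map_sum]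
    refine Finset.sum_congr rfl fun j _ => ?_
    rw [show (Pi.single j (x j) : Fin p → ℝ) = x j • (Pi.single j 1 : Fin p → ℝ) by
      rw [← Pi.single_smul, smul_eq_mul, mul_one], f.map_smul, smul_eq_mul]
  have hXh' : X.mulVec h' = 0 := by
    funext i
    have h0 := hf0 _ (hmemRow (Pi.single i 1))
    rw [hfrepr, dotlem, single_dotProduct] at h0
    simpa using h0
  set a : Fin p → ℝ := fun j => if b j = 0 then (if 0 ≤ h' j then 1 else -1) else sgn j with ha
  have haC : a ∈ C := by
    intro j _
    dsimp only
    by_cases hbj : b j = 0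
    · rw [if_pos hbj]
      simp only [ha]
      rw [if_pos hbj]
      split <;> constructor <;> norm_num
    · rw [if_neg hbj]
      simp only [ha]
      rw [if_neg hbj]
      exact Set.mem_singleton_iff.mpr rfl
  have hfa : f a < 0 := lt_trans (lt_trans (hfC a haC) hus) hs0
  have hafree : ∀ j, b j = 0 → a j * h' j = |h' j| := by
    intro j hbj
    simp only [ha]
    rw [if_pos hbj]
    rcases le_or_gt 0 (h' j) with hj | hj
    · rw [if_pos hj, one_mul, abs_of_nonneg hj]
    · rw [if_neg (not_le.mpr hj), neg_one_mul, abs_of_neg hj]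
  have key : ∀ ε : ℝ, 0 < ε → (∀ j, b j ≠ 0 → ε * |h' j| < |b j|) →
      ∑ j, |b j + ε * h' j| = l1norm b + ε * f a := by
    intro ε hε hsmall
    rw [hfrepr a, l1norm, Finset.mul_sum, ← Finset.sum_add_distrib]
    refine Finset.sum_congr rfl fun j _ => ?_
    by_cases hbj : b j = 0
    · rw [hbj, zero_add, abs_zero, zero_add, abs_mul, abs_of_nonneg hε.le, hafree j hbj]
    · have hsm := hsmall j hbj
      have hnegabs := neg_abs_le (h' j)
      have hleabs := le_abs_self (h' j)
      rcases lt_or_gt_of_ne hbj with hbneg | hbpos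
      · have habs : |b j| = -b j := abs_of_neg hbneg
        have h1 : b j + ε * h' j < 0 := by nlinarith
        rw [abs_of_neg h1, habs]
        simp only [ha, hsgn]
        rw [if_neg hbj, if_neg (not_lt.mpr hbneg.le)]
        ring
      · have habs : |b j| = b j := abs_of_pos hbpos
        have h1 : 0 < b j + ε * h' j := by nlinarith
        rw [abs_of_pos h1, habs]
        simp only [ha, hsgn]
        rw [if_neg hbj, if_pos hbpos]
        ring
  set Sb := univ.filter (fun j => b j ≠ 0) with hSb
  rcases Finset.eq_empty_or_nonempty Sb with hemp | hne
  · have hzero : ∀ j, b j = 0 := by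
      intro j
      by_contra hc
      have : j ∈ Sb := Finset.mem_filter.mpr ⟨Finset.mem_univ _, hc⟩
      rw [hemp] at this
      exact absurd this (Finset.notMem_empty j)
    have : 0 ≤ f a := by
      rw [hfrepr a]
      refine Finset.sum_nonneg fun j _ => ?_
      rw [hafree j (hzero j)]
      exact abs_nonneg _
    linarith
  · set ε := Sb.inf' hne (fun j => |b j| / (|h' j| + 1)) with hε
    have hεpos : 0 < ε := by
      rw [hε, Finset.lt_inf'_iff]
      intro j hj
      have : b j ≠ 0 := (Finset.mem_filter.mp hj).2
      have h1 : (0:ℝ) < |b j| := abs_pos.mpr this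
      have h2 : (0:ℝ) < |h' j| + 1 := by positivity
      exact div_pos h1 h2
    have hsmall : ∀ j, b j ≠ 0 → ε * |h' j| < |b j| := by
      intro j hbj
      have hjS : j ∈ Sb := Finset.mem_filter.mpr ⟨Finset.mem_univ _, hbj⟩
      have hle : ε ≤ |b j| / (|h' j| + 1) := Finset.inf'_le _ hjS
      have h2 : (0:ℝ) < |h' j| + 1 := by positivity
      have : ε * (|h' j| + 1) ≤ |b j| := by
        rw [← le_div_iff₀ h2]; exact hle
      nlinarith [abs_nonneg (h' j)]
    have hfeas : X.mulVec (fun j => b j + ε * h' j) = y := by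
      have : (fun j => b j + ε * h' j) = b + ε • h' := by
        funext j; simp [mul_comm]
      rw [this, Matrix.mulVec_add, Matrix.mulVec_smul, hXh', smul_zero, add_zero, hb.1]
    have hc := hb.2 _ hfeas
    rw [show l1norm (fun j => b j + ε * h' j) = ∑ j, |b j + ε * h' j| from rfl,
      key ε hεpos hsmall] at hc
    nlinarith

lemma rank_lt_of_no_extension (X : Matrix (Fin n) (Fin p) ℝ) (T : Finset (Fin p))
    (hw : ∀ z : Fin n → ℝ, (∀ j ∈ T, Xᵀ.mulVec z j = 0) → Xᵀ.mulVec z = 0)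
    (h : Fin p → ℝ) (hh0 : h ≠ 0) (hker : X.mulVec h = 0) (hsupp : ∀ j, h j ≠ 0 → j ∈ T) :
    X.rank < T.card := by
  classical
  set Row := LinearMap.range Xᵀ.mulVecLin with hRow
  have hrank : X.rank = Module.finrank ℝ Row := by rw [← Matrix.rank_transpose X]; rfl
  set π : (Fin p → ℝ) →ₗ[ℝ] ({j // j ∈ T} → ℝ) := LinearMap.funLeft ℝ ℝ Subtype.val with hπ
  set f : Row →ₗ[ℝ] ({j // j ∈ T} → ℝ) := π.comp Row.subtype with hf
  have hinj : Function.Injective f := by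
    rw [← LinearMap.ker_eq_bot, LinearMap.ker_eq_bot']
    intro w hwz
    obtain ⟨z, hz⟩ := w.2
    have hT : ∀ j ∈ T, Xᵀ.mulVec z j = 0 := by
      intro j hj
      have := congrFun hwz ⟨j, hj⟩
      simp only [hf, LinearMap.comp_apply, Pi.zero_apply] at this
      rw [Matrix.mulVecLin_apply] at hz
      rw [hz]
      exact this
    have : Xᵀ.mulVec z = 0 := hw z hT
    apply Subtype.ext
    rw [← hz, Matrix.mulVecLin_apply, this]
    rfl
  have hle : Module.finrank ℝ Row ≤ T.card := by
    have := LinearMap.finrank_le_finrank_of_injective hinj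
    rwa [Module.finrank_fintype_fun_eq_card, Fintype.card_coe] at this
  have hne : Module.finrank ℝ Row ≠ T.card := by
    intro heq
    have hrg : Module.finrank ℝ (LinearMap.range f) = Module.finrank ℝ ({j // j ∈ T} → ℝ) := by
      rw [LinearMap.finrank_range_of_inj hinj, heq, Module.finrank_fintype_fun_eq_card,
        Fintype.card_coe]
    have hsurj : Function.Surjective f := by
      rw [← LinearMap.range_eq_top]
      exact Submodule.eq_top_of_finrank_eq hrg
    obtain ⟨j₀, hj₀⟩ := Function.ne_iff.mp hh0
    have hj₀T : j₀ ∈ T := hsupp j₀ hj₀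
    obtain ⟨w, hwu⟩ := hsurj (Pi.single ⟨j₀, hj₀T⟩ (1 : ℝ))
    obtain ⟨z, hz⟩ := w.2
    rw [Matrix.mulVecLin_apply] at hz
    have hzero : ∑ j, Xᵀ.mulVec z j * h j = 0 := by
      rw [dotlem, hker, dotProduct_zero]
    have hval : ∑ j, Xᵀ.mulVec z j * h j = h j₀ := by
      rw [← Finset.sum_subset (Finset.subset_univ T)
        (fun x _ hx => by rw [not_not.mp fun hc => hx (hsupp x hc), mul_zero])]
      have : ∀ j ∈ T, Xᵀ.mulVec z j * h j = (if j = j₀ then (1:ℝ) else 0) * h j := by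
        intro j hj
        congr 1
        have := congrFun hwu ⟨j, hj⟩
        rw [hf] at this
        simp only [LinearMap.comp_apply] at this
        rw [show (π (Row.subtype w)) ⟨j, hj⟩ = w.1 j from rfl] at this
        rw [show (Xᵀ.mulVec z) j = w.1 j from congrFun hz j, this, Pi.single_apply]
        simp [Subtype.ext_iff]
      rw [Finset.sum_congr rfl this]
      simp [Finset.sum_ite_eq' T j₀ h, hj₀T, ite_mul]
    rw [hval] at hzero
    exact hj₀ hzero
  omega

lemma augment (X : Matrix (Fin n) (Fin p) ℝ) (k : ℕ) :
    ∀ z : Fin n → ℝ, (∀ j, |Xᵀ.mulVec z j| ≤ 1) →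
    (∃ h : Fin p → ℝ, h ≠ 0 ∧ X.mulVec h = 0 ∧ ∀ j, h j ≠ 0 → |Xᵀ.mulVec z j| = 1) →
    p ≤ k + (univ.filter fun j => |Xᵀ.mulVec z j| = 1).card →
    ∃ z' : Fin n → ℝ, (∀ j, |Xᵀ.mulVec z' j| ≤ 1) ∧
      X.rank < (univ.filter fun j => |Xᵀ.mulVec z' j| = 1).card := by
  classical
  induction k with
  | zero =>
    intro z hzb hcert hcard
    have hcod : (univ.filter fun j => |Xᵀ.mulVec z j| = 1).card = p := by
      have h1 : (univ.filter fun j => |Xᵀ.mulVec z j| = 1).card ≤ p := by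
        simpa using Finset.card_le_card
          (Finset.subset_univ (univ.filter fun j => |Xᵀ.mulVec z j| = 1))
      omega
    have hT : (univ.filter fun j => |Xᵀ.mulVec z j| = 1) = univ := by
      apply Finset.eq_univ_of_card
      simpa using hcod
    obtain ⟨h, hh0, hker, hsupp⟩ := hcert
    refine ⟨z, hzb, ?_⟩
    refine rank_lt_of_no_extension X _ ?_ h hh0 hker ?_
    · intro z₂ hz₂
      funext j
      exact hz₂ j (by rw [hT]; exact Finset.mem_univ j)
    · intro j hj
      exact Finset.mem_filter.mpr ⟨Finset.mem_univ j, hsupp j hj⟩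
  | succ k ih =>
    intro z hzb hcert hcard
    set v := Xᵀ.mulVec z with hv
    set T := (univ.filter fun j => |v j| = 1) with hTdef
    by_cases hgrow : ∃ z₂, (∀ j ∈ T, Xᵀ.mulVec z₂ j = 0) ∧ Xᵀ.mulVec z₂ ≠ 0
    · obtain ⟨z₂, hz₂T, hz₂0⟩ := hgrow
      set w := Xᵀ.mulVec z₂ with hw
      obtain ⟨j₁, hj₁⟩ := Function.ne_iff.mp hz₂0
      have hj₁' : w j₁ ≠ 0 := hj₁
      have hj₁T : j₁ ∉ T := fun hmem => hj₁' (hz₂T j₁ hmem)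
      set A := {t : ℝ | 0 ≤ t ∧ ∀ j, |v j + t * w j| ≤ 1} with hA
      have hA0 : (0 : ℝ) ∈ A := ⟨le_refl 0, by simpa using hzb⟩
      have hclosed : IsClosed A := by
        have : A = Set.Ici 0 ∩ ⋂ j, {t : ℝ | |v j + t * w j| ≤ 1} := by
          ext t; simp [hA, Set.mem_iInter]
        rw [this]
        refine isClosed_Ici.inter (isClosed_iInter fun j => ?_)
        exact isClosed_le ((continuous_const.add (continuous_id.mul continuous_const)).abs)
          continuous_const
      have hbdd : A ⊆ Set.Icc 0 (2 / |w j₁|) := by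
        intro t ht
        refine ⟨ht.1, ?_⟩
        rw [le_div_iff₀ (abs_pos.mpr hj₁')]
        have h1 : |t * w j₁| ≤ |v j₁ + t * w j₁| + |v j₁| := by
          have := abs_sub (v j₁ + t * w j₁) (v j₁)
          calc |t * w j₁| = |(v j₁ + t * w j₁) - v j₁| := by ring_nf
            _ ≤ |v j₁ + t * w j₁| + |v j₁| := abs_sub _ _
        have h2 := ht.2 j₁
        have h3 := hzb j₁
        rw [abs_mul, abs_of_nonneg ht.1] at h1
        linarith
      have hcpt : IsCompact A :=
        Metric.isCompact_of_isClosed_isBounded hclosed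
          ((Metric.isBounded_Icc _ _).subset hbdd)
      obtain ⟨ts, htA, htub⟩ := hcpt.exists_isGreatest ⟨0, hA0⟩
      set z' := z + ts • z₂ with hz'
      have hv' : ∀ j, Xᵀ.mulVec z' j = v j + ts * w j := by
        intro j
        rw [hz', Matrix.mulVec_add, Matrix.mulVec_smul]
        simp [hv, hw]
      have hb' : ∀ j, |Xᵀ.mulVec z' j| ≤ 1 := by
        intro j; rw [hv' j]; exact htA.2 j
      have hTsub : ∀ j ∈ T, Xᵀ.mulVec z' j = v j := by
        intro j hj
        rw [hv' j, hz₂T j hj, mul_zero, add_zero]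
      have hnew : ∃ j, ¬ |v j| = 1 ∧ |Xᵀ.mulVec z' j| = 1 := by
        by_contra hno
        push_neg at hno
        set S' := (univ.filter fun j => ¬ |v j| = 1) with hS'
        have hS'ne : S'.Nonempty := ⟨j₁, Finset.mem_filter.mpr ⟨Finset.mem_univ _,
          fun hc => hj₁T (Finset.mem_filter.mpr ⟨Finset.mem_univ _, hc⟩)⟩⟩
        set ε := S'.inf' hS'ne (fun j => (1 - |v j + ts * w j|) / (|w j| + 1)) with hε
        have hεpos : 0 < ε := by
          rw [hε, Finset.lt_inf'_iff]
          intro j hj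
          have hj' : ¬ |v j| = 1 := (Finset.mem_filter.mp hj).2
          have hlt : |v j + ts * w j| < 1 :=
            lt_of_le_of_ne (htA.2 j) (by rw [← hv' j]; exact hno j hj')
          have hd : 0 < |w j| + 1 := by positivity
          exact div_pos (by linarith) hd
        have hmem : ts + ε ∈ A := by
          refine ⟨by linarith [htA.1], fun j => ?_⟩
          by_cases hj : |v j| = 1
          · have : w j = 0 := hz₂T j (Finset.mem_filter.mpr ⟨Finset.mem_univ _, hj⟩)
            rw [this, mul_zero, add_zero, hj]
          · have hjS : j ∈ S' := Finset.mem_filter.mpr ⟨Finset.mem_univ _, hj⟩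
            have hεle : ε ≤ (1 - |v j + ts * w j|) / (|w j| + 1) := Finset.inf'_le _ hjS
            have hwpos : (0:ℝ) < |w j| + 1 := by positivity
            have hεw : ε * (|w j| + 1) ≤ 1 - |v j + ts * w j| := by
              rw [← le_div_iff₀ hwpos]; exact hεle
            have h1 : |v j + (ts + ε) * w j| ≤ |v j + ts * w j| + ε * |w j| := by
              calc |v j + (ts + ε) * w j| = |(v j + ts * w j) + ε * w j| := by ring_nf
                _ ≤ |v j + ts * w j| + |ε * w j| := abs_add_le _ _
                _ = |v j + ts * w j| + ε * |w j| := by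
                    rw [abs_mul, abs_of_nonneg hεpos.le]
            nlinarith [abs_nonneg (w j)]
        have := htub hmem
        linarith
      obtain ⟨js, hjs1, hjs2⟩ := hnew
      have hjsT : js ∉ T := fun hc => hjs1 (Finset.mem_filter.mp hc).2
      have hsubset : insert js T ⊆ (univ.filter fun j => |Xᵀ.mulVec z' j| = 1) := by
        intro j hj
        rcases Finset.mem_insert.mp hj with rfl | hjT
        · exact Finset.mem_filter.mpr ⟨Finset.mem_univ _, hjs2⟩
        · refine Finset.mem_filter.mpr ⟨Finset.mem_univ _, ?_⟩
          rw [hTsub j hjT]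
          exact (Finset.mem_filter.mp hjT).2
      have hcard' : T.card + 1 ≤ (univ.filter fun j => |Xᵀ.mulVec z' j| = 1).card := by
        have := Finset.card_le_card hsubset
        rwa [Finset.card_insert_of_notMem hjsT] at this
      obtain ⟨h, hh0, hker, hsupp⟩ := hcert
      refine ih z' hb' ⟨h, hh0, hker, fun j hj => ?_⟩ (by omega)
      have hjT : j ∈ T := Finset.mem_filter.mpr ⟨Finset.mem_univ _, hsupp j hj⟩
      rw [hTsub j hjT]
      exact (Finset.mem_filter.mp hjT).2
    · push_neg at hgrow
      obtain ⟨h, hh0, hker, hsupp⟩ := hcert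
      refine ⟨z, hzb, ?_⟩
      refine rank_lt_of_no_extension X _ ?_ h hh0 hker ?_
      · intro z₂ hz₂
        by_contra hne
        exact hne (hgrow z₂ hz₂ ▸ rfl)
      · intro j hj
        exact Finset.mem_filter.mpr ⟨Finset.mem_univ j, hsupp j hj⟩

end Aux

theorem bp_uniqueness_characterization {n p : ℕ} (X : Matrix (Fin n) (Fin p) ℝ) :
    (∃ (y : Fin n → ℝ), (∃ b, X.mulVec b = y) ∧
        ∃ b₁ b₂ : Fin p → ℝ, b₁ ≠ b₂ ∧ IsBPSol X y b₁ ∧ IsBPSol X y b₂) ↔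
      ∃ σ : Fin p → ℝ, (∀ j, σ j = -1 ∨ σ j = 0 ∨ σ j = 1) ∧
        (∃ z : Fin n → ℝ, Xᵀ.mulVec z ∈ cubeFace σ) ∧
        X.rank < ({j | σ j ≠ 0} : Finset (Fin p)).card := by
  constructor
  · rintro ⟨y, ⟨b₀, hb₀⟩, b₁, b₂, hne, h1, h2⟩
    set b : Fin p → ℝ := fun j => (b₁ j + b₂ j) / 2 with hbdef
    have hXb : X.mulVec b = y := by
      have hb2 : b = (2⁻¹ : ℝ) • (b₁ + b₂) := by
        funext j; simp [hbdef]; ring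
      rw [hb2, Matrix.mulVec_smul, Matrix.mulVec_add, h1.1, h2.1]
      funext i; simp; ring
    have heqnorm : l1norm b₁ = l1norm b₂ := le_antisymm (h1.2 b₂ h2.1) (h2.2 b₁ h1.1)
    have hble : ∀ j, |b j| ≤ (|b₁ j| + |b₂ j|) / 2 := by
      intro j
      rw [hbdef]
      dsimp only
      rw [abs_div, abs_two]
      linarith [abs_add_le (b₁ j) (b₂ j)]
    have hhalf : ∑ j, (|b₁ j| + |b₂ j|) / 2 = l1norm b₁ := by
      have hd : ∑ j, (|b₁ j| + |b₂ j|) / 2 = (∑ j, |b₁ j| + ∑ j, |b₂ j|) / 2 := by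
        rw [← Finset.sum_add_distrib, ← Finset.sum_div]
      have h2 : ∑ j, |b₂ j| = ∑ j, |b₁ j| := by
        have hh := heqnorm
        rw [l1norm, l1norm] at hh
        linarith
      rw [hd, h2, l1norm]
      ring
    have hsum1 : l1norm b ≤ l1norm b₁ := by
      rw [l1norm, ← hhalf]
      exact Finset.sum_le_sum fun j _ => hble j
    have hbmin : IsBPSol X y b := ⟨hXb, fun c hc => le_trans hsum1 (h1.2 c hc)⟩
    have hge : l1norm b₁ ≤ l1norm b := h1.2 b hXb
    have hTeq : ∀ j, |b j| = (|b₁ j| + |b₂ j|) / 2 := by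
      by_contra hc
      push_neg at hc
      obtain ⟨j₀, hj₀⟩ := hc
      have hlt : ∑ j, |b j| < ∑ j, (|b₁ j| + |b₂ j|) / 2 :=
        Finset.sum_lt_sum (fun j _ => hble j)
          ⟨j₀, Finset.mem_univ _, lt_of_le_of_ne (hble j₀) hj₀⟩
      rw [hhalf] at hlt
      have : l1norm b < l1norm b₁ := hlt
      linarith
    set h : Fin p → ℝ := fun j => b₂ j - b₁ j with hhdef
    have hh0 : h ≠ 0 := by
      intro hz
      apply hne
      funext j
      have := congrFun hz j
      simp [hhdef] at this
      linarith
    have hker : X.mulVec h = 0 := by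
      have : h = b₂ - b₁ := rfl
      rw [this, Matrix.mulVec_sub, h1.1, h2.1, sub_self]
    have hsupp : ∀ j, h j ≠ 0 → b j ≠ 0 := by
      intro j hj hbj
      have hT := hTeq j
      rw [hbj, abs_zero] at hT
      have h1n := abs_nonneg (b₁ j)
      have h2n := abs_nonneg (b₂ j)
      have hb1 : b₁ j = 0 := abs_eq_zero.mp (by linarith)
      have hb2 : b₂ j = 0 := abs_eq_zero.mp (by linarith)
      apply hj
      simp [hhdef, hb1, hb2]
    obtain ⟨z, hzb, hzt⟩ := exists_certificate X y b hbmin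
    obtain ⟨z', hz'b, hz'r⟩ := augment X p z hzb
      ⟨h, hh0, hker, fun j hj => hzt j (hsupp j hj)⟩ (Nat.le_add_right p _)
    classical
    set σ : Fin p → ℝ := fun j => if |Xᵀ.mulVec z' j| = 1 then Xᵀ.mulVec z' j else 0 with hσ
    have hσval : ∀ j, σ j = -1 ∨ σ j = 0 ∨ σ j = 1 := by
      intro j
      by_cases hj : |Xᵀ.mulVec z' j| = 1
      · rcases abs_eq (by norm_num : (0:ℝ) ≤ 1) |>.mp hj with hv | hv
        · right; right; simp [hσ, hj, hv]
        · left; simp [hσ, hj, hv]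
      · right; left; simp [hσ, hj]
    refine ⟨σ, hσval, ⟨z', ?_⟩, ?_⟩
    · intro j
      refine ⟨hz'b j, fun hσj => ?_⟩
      by_cases hj : |Xᵀ.mulVec z' j| = 1
      · simp [hσ, hj]
      · exact absurd (by simp [hσ, hj]) hσj
    · have hset : ({j | σ j ≠ 0} : Finset (Fin p)) =
          univ.filter (fun j => |Xᵀ.mulVec z' j| = 1) := by
        ext j
        rw [Finset.mem_filter, Finset.mem_filter]
        refine ⟨fun ⟨hu, hj⟩ => ⟨hu, ?_⟩, fun ⟨hu, hj⟩ => ⟨hu, ?_⟩⟩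
        · by_contra hc
          exact hj (by simp [hσ, hc])
        · simp only [hσ, if_pos hj]
          intro hc
          rw [hc, abs_zero] at hj
          norm_num at hj
      rw [hset]
      exact hz'r
  · rintro ⟨σ, hσv, ⟨z, hz⟩, hrank⟩
    have hσ1 : ∀ j, σ j ≠ 0 → σ j * σ j = 1 := by
      intro j hj
      rcases hσv j with h1 | h1 | h1
      · rw [h1]; norm_num
      · exact absurd h1 hj
      · rw [h1]; norm_num
    obtain ⟨h, hh0, hker, hsupp⟩ := exists_ker X _ hrank
    have hσsupp : ∀ j, h j ≠ 0 → σ j ≠ 0 := by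
      intro j hj
      have := hsupp j hj
      rw [Finset.mem_filter] at this
      exact this.2
    set v := Xᵀ.mulVec z with hv
    have hvb : ∀ j, |v j| ≤ 1 := fun j => (hz j).1
    have hvσ : ∀ j, σ j ≠ 0 → v j = σ j := fun j => (hz j).2
    set M := ∑ j, |h j| with hM
    have hM0 : (0:ℝ) ≤ M := Finset.sum_nonneg fun j _ => abs_nonneg _
    set ε : ℝ := 1 / (1 + M) with hε
    have hεpos : 0 < ε := by rw [hε]; positivity
    have hεh : ∀ j, ε * |h j| ≤ 1 := by
      intro j
      have h1 : |h j| ≤ M := Finset.single_le_sum (f := fun j => |h j|)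
        (fun _ _ => abs_nonneg _) (Finset.mem_univ j)
      rw [hε]
      rw [div_mul_eq_mul_div, one_mul, div_le_one (by linarith)]
      linarith
    have hstep : ∀ j, |σ j| = v j * σ j := by
      intro j
      by_cases hj : σ j = 0
      · simp [hj]
      · rw [hvσ j hj]
        rcases hσv j with h1 | h1 | h1
        · rw [h1]; norm_num
        · exact absurd h1 hj
        · rw [h1]; norm_num
    have hl1σ : l1norm σ = z ⬝ᵥ X.mulVec σ := by
      rw [l1norm, ← dotlem X z σ]
      exact Finset.sum_congr rfl fun j _ => hstep j
    have hmin : ∀ c, X.mulVec c = X.mulVec σ → l1norm σ ≤ l1norm c := by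
      intro c hc
      rw [hl1σ, ← hc, ← dotlem X z c, l1norm]
      refine Finset.sum_le_sum fun j _ => ?_
      calc v j * c j ≤ |v j * c j| := le_abs_self _
        _ = |v j| * |c j| := abs_mul _ _
        _ ≤ 1 * |c j| := mul_le_mul_of_nonneg_right (hvb j) (abs_nonneg _)
        _ = |c j| := one_mul _
    set b₂ : Fin p → ℝ := fun j => σ j + ε * h j with hb₂
    have hXb₂ : X.mulVec b₂ = X.mulVec σ := by
      have : b₂ = σ + ε • h := by funext j; simp [hb₂]
      rw [this, Matrix.mulVec_add, Matrix.mulVec_smul, hker, smul_zero, add_zero]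
    have hterm : ∀ j, |σ j + ε * h j| = |σ j| + ε * (v j * h j) := by
      intro j
      by_cases hj : σ j = 0
      · have hhj : h j = 0 := by
          by_contra hc
          exact hσsupp j hc hj
        rw [hj, hhj]
        simp
      · have hvj := hvσ j hj
        have hbound := hεh j
        have hna := neg_abs_le (h j)
        have hla := le_abs_self (h j)
        have hεh' : ε * h j ≤ ε * |h j| := mul_le_mul_of_nonneg_left hla hεpos.le
        have hεh'' : -(ε * |h j|) ≤ ε * h j := by nlinarith
        rcases hσv j with h1 | h1 | h1
        · rw [h1] at hvj ⊢
          have hnp : -1 + ε * h j ≤ 0 := by nlinarith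
          rw [abs_of_nonpos hnp, hvj, abs_neg, abs_one]
          ring
        · exact absurd h1 hj
        · rw [h1] at hvj ⊢
          have hpos : 0 ≤ 1 + ε * h j := by nlinarith
          rw [abs_of_nonneg hpos, hvj, abs_one]
          ring
    have hl1b₂ : l1norm b₂ = l1norm σ := by
      rw [l1norm, l1norm]
      have : ∀ j, |b₂ j| = |σ j| + ε * (v j * h j) := fun j => hterm j
      rw [Finset.sum_congr rfl fun j _ => this j, Finset.sum_add_distrib]
      have hz0 : ∑ j, ε * (v j * h j) = 0 := by
        rw [← Finset.mul_sum]
        have : ∑ j, v j * h j = 0 := by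
          rw [hv, dotlem X z h, hker, dotProduct_zero]
        rw [this, mul_zero]
      rw [hz0, add_zero]
    have hneq : σ ≠ b₂ := by
      obtain ⟨j₀, hj₀⟩ := Function.ne_iff.mp hh0
      intro heq
      have := congrFun heq j₀
      simp only [hb₂] at this
      have : ε * h j₀ = 0 := by linarith
      rcases mul_eq_zero.mp this with hc | hc
      · exact absurd hc hεpos.ne'
      · exact hj₀ hc
    exact ⟨X.mulVec σ, ⟨σ, rfl⟩, σ, b₂, hneq, ⟨rfl, hmin⟩,
      ⟨hXb₂, fun c hc => hl1b₂ ▸ hmin c (hXb₂ ▸ hc)⟩⟩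
end

section
/- Let X ∈ ℝ^{n×p} and let ‖·‖ be a norm on ℝ^p whose unit ball is a polytope. There exists y ∈ ℝ^n for which the penalized problem argmin_b (1/2)‖y − Xb‖₂² + ‖b‖ has more than one minimizer if and only if row(X) intersects a face of the dual norm unit ball B* whose codimension exceeds rk(X). -/
open Finset Matrix

namespace PUC

variable {n p k : ℕ}

lemma dot_eq (x y : Fin p → ℝ) : dot x y = x ⬝ᵥ y := rfl

lemma dot_comm (x y : Fin p → ℝ) : dot x y = dot y x := dotProduct_comm x y

lemma dot_sum_left {ι : Type*} (W : Finset ι) (f : ι → (Fin p → ℝ)) (x : Fin p → ℝ) :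
    dot (∑ u ∈ W, f u) x = ∑ u ∈ W, dot (f u) x := by
  simp only [dot, Finset.sum_apply, Finset.sum_mul]
  exact Finset.sum_comm

/-- orthogonal complement w.r.t. `dot` -/
noncomputable def perp (S : Submodule ℝ (Fin p → ℝ)) : Submodule ℝ (Fin p → ℝ) :=
  Submodule.comap ((WithLp.linearEquiv 2 ℝ (Fin p → ℝ)).symm.toLinearMap)
    ((Submodule.map ((WithLp.linearEquiv 2 ℝ (Fin p → ℝ)).symm.toLinearMap) S)ᗮ)

lemma mem_perp {S : Submodule ℝ (Fin p → ℝ)} {v : Fin p → ℝ} :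
    v ∈ perp S ↔ ∀ u ∈ S, dot u v = 0 := by
  simp only [perp, Submodule.mem_comap, Submodule.mem_orthogonal]
  constructor
  · intro h u hu
    have := h _ (Submodule.mem_map_of_mem (f := (WithLp.linearEquiv 2 ℝ (Fin p → ℝ)).symm.toLinearMap) hu)
    simpa [PiLp.inner_apply, RCLike.inner_apply, dot, mul_comm] using this
  · rintro h w hw
    rcases Submodule.mem_map.mp hw with ⟨u, hu, rfl⟩
    simpa [PiLp.inner_apply, RCLike.inner_apply, dot, mul_comm] using h u hu

lemma finrank_add_finrank_perp (S : Submodule ℝ (Fin p → ℝ)) :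
    Module.finrank ℝ S + Module.finrank ℝ (perp S) = p := by
  classical
  set e := (WithLp.linearEquiv 2 ℝ (Fin p → ℝ)).symm
  have h1 : perp S = Submodule.map e.symm.toLinearMap ((Submodule.map e.toLinearMap S)ᗮ) := by
    rw [perp, Submodule.comap_equiv_eq_map_symm]
  have h2 : Module.finrank ℝ (perp S) = Module.finrank ℝ ((Submodule.map e.toLinearMap S)ᗮ) := by
    rw [h1]; exact LinearEquiv.finrank_map_eq e.symm _
  have h3 : Module.finrank ℝ (Submodule.map e.toLinearMap S) = Module.finrank ℝ S :=
    LinearEquiv.finrank_map_eq e S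
  have h4 := Submodule.finrank_add_finrank_orthogonal (𝕜 := ℝ) (Submodule.map e.toLinearMap S)
  rw [h2, ← h3]
  rw [h4]
  simp [finrank_euclideanSpace]

lemma mem_perp_span {T : Set (Fin p → ℝ)} {v : Fin p → ℝ} :
    v ∈ perp (Submodule.span ℝ T) ↔ ∀ u ∈ T, dot u v = 0 := by
  rw [mem_perp]
  constructor
  · exact fun h u hu => h u (Submodule.subset_span hu)
  · intro h u hu
    induction hu using Submodule.span_induction with
    | mem x hx => exact h x hx
    | zero => simp [dot_eq]
    | add x y _ _ hx hy => rw [dot_eq, add_dotProduct, ← dot_eq x, ← dot_eq y, hx, hy, add_zero]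
    | smul c x _ hx => rw [dot_eq, smul_dotProduct, ← dot_eq x, hx, smul_zero]

section Norm

variable {N : (Fin p → ℝ) → ℝ} {V : Fin k → (Fin p → ℝ)}

lemma _root_.IsNorm.zero (hN : IsNorm N) : N 0 = 0 := (hN.eq_zero_iff 0).mpr rfl

lemma nonempty_index (hN : IsNorm N) (hB : {x | N x ≤ 1} = convexHull ℝ (Set.range V)) :
    Nonempty (Fin k) := by
  by_contra h
  have h0 : (0 : Fin p → ℝ) ∈ {x | N x ≤ 1} := by
    simp [Set.mem_setOf_eq, hN.zero]
  rw [hB] at h0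
  rw [Set.range_eq_empty_iff.mpr ⟨fun i => (h ⟨i⟩)⟩, convexHull_empty] at h0
  exact h0

lemma N_V_le_one (hN : IsNorm N) (hB : {x | N x ≤ 1} = convexHull ℝ (Set.range V)) (j : Fin k) :
    N (V j) ≤ 1 := by
  have : V j ∈ convexHull ℝ (Set.range V) := subset_convexHull ℝ _ ⟨j, rfl⟩
  rw [← hB] at this
  exact this

lemma ball_dot_le (hN : IsNorm N) (hB : {x | N x ≤ 1} = convexHull ℝ (Set.range V))
    (x : Fin p → ℝ) (M : ℝ) (hM : ∀ j, dot (V j) x ≤ M) :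
    ∀ b, N b ≤ 1 → dot b x ≤ M := by
  have hlin : IsLinearMap ℝ (fun b : Fin p → ℝ => dot b x) := by
    constructor
    · intro a b; rw [dot_eq, add_dotProduct]; rfl
    · intro c a; rw [dot_eq, smul_dotProduct]; rfl
  have hconv : Convex ℝ {b : Fin p → ℝ | dot b x ≤ M} := convex_halfSpace_le hlin M
  intro b hb
  have hb' : b ∈ convexHull ℝ (Set.range V) := hB ▸ hb
  exact convexHull_min (by rintro _ ⟨j, rfl⟩; exact hM j) hconv hb'

lemma bddAbove_dual (hN : IsNorm N) (hB : {x | N x ≤ 1} = convexHull ℝ (Set.range V))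
    (x : Fin p → ℝ) : BddAbove {r | ∃ s, N s ≤ 1 ∧ r = dot s x} := by
  have hk := nonempty_index hN hB
  have hne : (Finset.univ : Finset (Fin k)).Nonempty := Finset.univ_nonempty
  refine ⟨Finset.univ.sup' hne (fun j => dot (V j) x), ?_⟩
  rintro r ⟨s, hs, rfl⟩
  exact ball_dot_le hN hB x _ (fun j => Finset.le_sup' (f := fun j => dot (V j) x) (Finset.mem_univ j)) s hs

lemma dual_pair (hN : IsNorm N) (hB : {x | N x ≤ 1} = convexHull ℝ (Set.range V))
    {x : Fin p → ℝ} (hx : dualNorm N x ≤ 1) (b : Fin p → ℝ) : dot x b ≤ N b := by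
  by_cases hb : N b = 0
  · have hb0 : b = 0 := (hN.eq_zero_iff b).mp hb
    subst hb0
    rw [hb]
    simp [dot]
  · have hc : 0 < N b := lt_of_le_of_ne (hN.nonneg b) (Ne.symm hb)
    have hmem : dot ((N b)⁻¹ • b) x ∈ {r | ∃ s, N s ≤ 1 ∧ r = dot s x} := by
      refine ⟨(N b)⁻¹ • b, ?_, rfl⟩
      rw [hN.smul, abs_of_pos (inv_pos.mpr hc), inv_mul_cancel₀ hb]
    have hle : dot ((N b)⁻¹ • b) x ≤ 1 := le_trans (le_csSup (bddAbove_dual hN hB x) hmem) hx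
    have h2 : dot ((N b)⁻¹ • b) x = (N b)⁻¹ * dot b x := by
      rw [dot_eq, smul_dotProduct]; rfl
    rw [h2] at hle
    rw [dot_comm]
    have h3 := mul_le_mul_of_nonneg_left hle (le_of_lt hc)
    rw [mul_one, ← mul_assoc, mul_inv_cancel₀ hb, one_mul] at h3
    exact h3

lemma dualNorm_le_one_iff (hN : IsNorm N) (hB : {x | N x ≤ 1} = convexHull ℝ (Set.range V))
    (x : Fin p → ℝ) : dualNorm N x ≤ 1 ↔ ∀ j, dot (V j) x ≤ 1 := by
  constructor
  · intro h j
    rw [dot_comm]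
    exact le_trans (dual_pair hN hB h (V j)) (N_V_le_one hN hB j)
  · intro h
    refine csSup_le ?_ ?_
    · exact ⟨0, 0, by simp [hN.zero], by simp [dot]⟩
    · rintro r ⟨s, hs, rfl⟩
      exact ball_dot_le hN hB x 1 h s hs

lemma N_sum_le (hN : IsNorm N) {ι : Type*} (W : Finset ι) (f : ι → (Fin p → ℝ)) :
    N (∑ u ∈ W, f u) ≤ ∑ u ∈ W, N (f u) := by
  classical
  induction W using Finset.induction_on with
  | empty => simp [hN.zero]
  | insert _ _ hnot ih =>
    rw [Finset.sum_insert hnot, Finset.sum_insert hnot]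
    exact le_trans (hN.triangle _ _) (by linarith)

/-- cone lemma: nonneg combinations of "active" ball vectors achieve `dot s b = N b`. -/
lemma cone_dot_eq_N (hN : IsNorm N) (hB : {x | N x ≤ 1} = convexHull ℝ (Set.range V))
    {s : Fin p → ℝ} (hpair : ∀ b, dot s b ≤ N b)
    (W : Finset (Fin p → ℝ)) (hW1 : ∀ u ∈ W, dot s u = 1) (hWN : ∀ u ∈ W, N u ≤ 1)
    (g : (Fin p → ℝ) → ℝ) (hg : ∀ u ∈ W, 0 ≤ g u) :
    dot s (∑ u ∈ W, g u • u) = N (∑ u ∈ W, g u • u) := by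
  have h1 : dot s (∑ u ∈ W, g u • u) = ∑ u ∈ W, g u := by
    rw [dot_comm, dot_sum_left]
    apply Finset.sum_congr rfl
    intro u hu
    rw [dot_eq, smul_dotProduct, smul_eq_mul, ← dot_eq, dot_comm, hW1 u hu, mul_one]
  have h2 : N (∑ u ∈ W, g u • u) ≤ ∑ u ∈ W, g u := by
    refine le_trans (N_sum_le hN W _) ?_
    apply Finset.sum_le_sum
    intro u hu
    rw [hN.smul, abs_of_nonneg (hg u hu)]
    exact le_trans (mul_le_mul_of_nonneg_left (hWN u hu) (hg u hu)) (by rw [mul_one])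
  exact le_antisymm (hpair _) (h2.trans h1.ge)

end Norm

section Mat

variable (X : Matrix (Fin n) (Fin p) ℝ)

lemma dot_mulVec_eq' (z : Fin n → ℝ) (v : Fin p → ℝ) :
    dot z (X.mulVec v) = dot (Xᵀ.mulVec z) v := by
  rw [dot_eq, dot_eq, Matrix.dotProduct_mulVec, Matrix.mulVec_transpose]

noncomputable def rowSp : Submodule ℝ (Fin p → ℝ) := LinearMap.range (Xᵀ.mulVecLin)

noncomputable def kerSp : Submodule ℝ (Fin p → ℝ) := LinearMap.ker (X.mulVecLin)

lemma finrank_rowSp : Module.finrank ℝ (rowSp X) = X.rank := by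
  rw [rowSp, show Module.finrank ℝ (LinearMap.range (Xᵀ.mulVecLin)) = Xᵀ.rank from rfl,
    Matrix.rank_transpose]

lemma rank_add_finrank_kerSp : X.rank + Module.finrank ℝ (kerSp X) = p := by
  have := LinearMap.finrank_range_add_finrank_ker (X.mulVecLin)
  rw [show Module.finrank ℝ (LinearMap.range (X.mulVecLin)) = X.rank from rfl] at this
  exact this.trans (by simp)

lemma rowSp_eq_perp_kerSp : rowSp X = perp (kerSp X) := by
  apply Submodule.eq_of_le_of_finrank_eq
  · rintro _ ⟨z, rfl⟩
    rw [mem_perp]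
    intro u hu
    have hu0 : X.mulVec u = 0 := hu
    show dot u (Xᵀ.mulVecLin z) = 0
    rw [show Xᵀ.mulVecLin z = Xᵀ.mulVec z from rfl, dot_comm, ← dot_mulVec_eq', hu0]
    simp [dot]
  · rw [finrank_rowSp]
    have h1 := finrank_add_finrank_perp (kerSp X)
    have h2 := rank_add_finrank_kerSp X
    omega

variable {N : (Fin p → ℝ) → ℝ}

lemma obj_sub_obj (y : Fin n → ℝ) (β b : Fin p → ℝ) :
    obj X N y b - obj X N y β =
      dot (Xᵀ.mulVec (y - X.mulVec β)) (β - b)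
        + (1/2) * ∑ i, (X.mulVec β i - X.mulVec b i)^2 + (N b - N β) := by
  have hdot : dot (Xᵀ.mulVec (y - X.mulVec β)) (β - b)
      = ∑ i, (y i - X.mulVec β i) * (X.mulVec β i - X.mulVec b i) := by
    rw [← dot_mulVec_eq', Matrix.mulVec_sub, dot]
    simp [Pi.sub_apply]
  have e1 : ∑ i, (y i - X.mulVec b i)^2
      = ∑ i, ((y i - X.mulVec β i)^2
          + (2 * ((y i - X.mulVec β i) * (X.mulVec β i - X.mulVec b i))
            + (X.mulVec β i - X.mulVec b i)^2)) := by
    apply Finset.sum_congr rfl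
    intro i _
    ring
  rw [obj, obj, hdot, e1, Finset.sum_add_distrib, Finset.sum_add_distrib, ← Finset.mul_sum]
  ring

lemma opt_of (hN : IsNorm N) {z : Fin n → ℝ} {β : Fin p → ℝ}
    (hpair : ∀ v, dot (Xᵀ.mulVec z) v ≤ N v) (hβ : dot (Xᵀ.mulVec z) β = N β) :
    ∀ b, obj X N (X.mulVec β + z) β ≤ obj X N (X.mulVec β + z) b := by
  intro b
  have hzz : (X.mulVec β + z) - X.mulVec β = z := by abel
  have h := obj_sub_obj X (N := N) (X.mulVec β + z) β b
  rw [hzz] at h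
  have hsub : dot (Xᵀ.mulVec z) (β - b) = N β - dot (Xᵀ.mulVec z) b := by
    rw [dot_eq, dotProduct_sub, ← dot_eq, ← dot_eq, hβ]
  have hsq : (0:ℝ) ≤ ∑ i, (X.mulVec β i - X.mulVec b i)^2 :=
    Finset.sum_nonneg fun i _ => sq_nonneg _
  have hb := hpair b
  linarith [h, hsub, hsq, hb]

lemma le_zero_of_forall_unit {Q c : ℝ} (hQ : 0 ≤ Q)
    (h : ∀ t : ℝ, 0 < t → t ≤ 1 → c ≤ t / 2 * Q) : c ≤ 0 := by
  by_contra hc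
  push_neg at hc
  have hQ1 : (0:ℝ) < Q + 1 := by linarith
  set t := min (1/2 : ℝ) (c / (Q+1)) with ht
  have ht0 : 0 < t := lt_min (by norm_num) (div_pos hc hQ1)
  have ht1 : t ≤ 1 := le_trans (min_le_left _ _) (by norm_num)
  have h1 := h t ht0 ht1
  have h2 : t * (Q+1) ≤ c := by
    have h3 := min_le_right (1/2 : ℝ) (c / (Q+1))
    have h4 : t * (Q+1) ≤ (c/(Q+1)) * (Q+1) := by nlinarith
    rwa [div_mul_cancel₀ _ (ne_of_gt hQ1)] at h4
  nlinarith

lemma opt_nec (hN : IsNorm N) {y : Fin n → ℝ} {β : Fin p → ℝ}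
    (hopt : ∀ b, obj X N y β ≤ obj X N y b) :
    (∀ v, dot (Xᵀ.mulVec (y - X.mulVec β)) v ≤ N v)
      ∧ dot (Xᵀ.mulVec (y - X.mulVec β)) β = N β := by
  set s := Xᵀ.mulVec (y - X.mulVec β) with hs
  have hpair : ∀ v, dot s v ≤ N v := by
    intro v
    have key : ∀ t : ℝ, 0 < t → t ≤ 1 → dot s v - N v ≤ t / 2 * (∑ i, (X.mulVec v i)^2) := by
      intro t ht0 _
      have h := obj_sub_obj X (N := N) y β (β + t • v)
      have h0 : 0 ≤ obj X N y (β + t • v) - obj X N y β := by linarith [hopt (β + t • v)]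
      rw [h] at h0
      have e1 : dot s (β - (β + t • v)) = -(t * dot s v) := by
        have : β - (β + t • v) = -(t • v) := by abel
        rw [this, dot_eq, dotProduct_neg, dotProduct_smul, ← dot_eq,
          smul_eq_mul]
      have e2 : ∀ i, X.mulVec β i - X.mulVec (β + t • v) i = -(t * X.mulVec v i) := by
        intro i
        rw [Matrix.mulVec_add, Matrix.mulVec_smul]
        simp only [Pi.add_apply, Pi.smul_apply, smul_eq_mul]
        ring
      have e3 : ∑ i, (X.mulVec β i - X.mulVec (β + t • v) i)^2
          = t^2 * ∑ i, (X.mulVec v i)^2 := by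
        rw [Finset.mul_sum]
        apply Finset.sum_congr rfl
        intro i _
        rw [e2 i]
        ring
      have e4 : N (β + t • v) ≤ N β + t * N v := by
        have := hN.triangle β (t • v)
        rw [hN.smul, abs_of_pos ht0] at this
        exact this
      rw [e1, e3] at h0
      have hQ : (0:ℝ) ≤ ∑ i, (X.mulVec v i)^2 := Finset.sum_nonneg fun i _ => sq_nonneg _
      nlinarith
    have := le_zero_of_forall_unit (Finset.sum_nonneg fun i (_ : i ∈ Finset.univ) => sq_nonneg (X.mulVec v i)) key
    linarith
  refine ⟨hpair, ?_⟩
  have hge : N β - dot s β ≤ 0 := by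
    apply le_zero_of_forall_unit
      (Finset.sum_nonneg fun i (_ : i ∈ Finset.univ) => sq_nonneg (X.mulVec β i))
    intro t ht0 ht1
    have h := obj_sub_obj X (N := N) y β ((1 - t) • β)
    have h0 : 0 ≤ obj X N y ((1 - t) • β) - obj X N y β := by linarith [hopt ((1 - t) • β)]
    rw [h] at h0
    have e1 : dot s (β - (1 - t) • β) = t * dot s β := by
      have : β - (1 - t) • β = t • β := by
        rw [sub_smul, one_smul]
        abel
      rw [this, dot_eq, dotProduct_smul, ← dot_eq, smul_eq_mul]
    have e2 : ∀ i, X.mulVec β i - X.mulVec ((1 - t) • β) i = t * X.mulVec β i := by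
      intro i
      rw [Matrix.mulVec_smul]
      simp only [Pi.smul_apply, smul_eq_mul]
      ring
    have e3 : ∑ i, (X.mulVec β i - X.mulVec ((1 - t) • β) i)^2
        = t^2 * ∑ i, (X.mulVec β i)^2 := by
      rw [Finset.mul_sum]
      apply Finset.sum_congr rfl
      intro i _
      rw [e2 i]
      ring
    have e4 : N ((1 - t) • β) = (1 - t) * N β := by
      rw [hN.smul, abs_of_nonneg (by linarith)]
    rw [e1, e3, e4] at h0
    nlinarith
  linarith [hpair β]

end Mat

section Backward

variable {N : (Fin p → ℝ) → ℝ} {V : Fin k → (Fin p → ℝ)}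

lemma finrank_pi_fin : Module.finrank ℝ (Fin p → ℝ) = p := by
  simp [Module.finrank_fintype_fun_eq_card]

lemma backward (X : Matrix (Fin n) (Fin p) ℝ) (hN : IsNorm N)
    (hB : {x | N x ≤ 1} = convexHull ℝ (Set.range V))
    (F : Set (Fin p → ℝ)) (hface : IsFace {s | dualNorm N s ≤ 1} F)
    (z : Fin n → ℝ) (hz : Xᵀ.mulVec z ∈ F)
    (hdim : X.rank + Module.finrank ℝ (vectorSpan ℝ F) < p) :
    ∃ (y : Fin n → ℝ) (β₁ β₂ : Fin p → ℝ), β₁ ≠ β₂ ∧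
        (∀ b, obj X N y β₁ ≤ obj X N y b) ∧ (∀ b, obj X N y β₂ ≤ obj X N y b) := by
  classical
  obtain ⟨a, b₀, ha, hFeq⟩ := hface
  set s := Xᵀ.mulVec z with hs
  have hsF : s ∈ F := hz
  have hsB : dualNorm N s ≤ 1 := by rw [hFeq] at hsF; exact hsF.1
  have hsa : dot a s = b₀ := by rw [hFeq] at hsF; exact hsF.2
  have hk := nonempty_index hN hB
  have hVs : ∀ j, dot (V j) s ≤ 1 := (dualNorm_le_one_iff hN hB s).mp hsB
  set W : Finset (Fin p → ℝ) := (Finset.univ.image V).filter (fun u => dot u s = 1) with hWdef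
  set U : Submodule ℝ (Fin p → ℝ) := Submodule.span ℝ (W : Set (Fin p → ℝ)) with hUdef
  -- every vector orthogonal to the active vertices is in the span of F's differences
  have hperp : perp U ≤ vectorSpan ℝ F := by
    intro v hv
    have hv' : ∀ u ∈ W, dot u v = 0 := by
      intro u hu
      exact mem_perp_span.mp hv u hu
    set g : Fin k → ℝ :=
      fun j => if dot (V j) s = 1 then 1 else (1 - dot (V j) s) / (|dot (V j) v| + 1) with hg
    have hgpos : ∀ j, 0 < g j := by
      intro j
      rw [hg]
      by_cases hj : dot (V j) s = 1
      · simp [hj]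
      · simp only [hj, if_false]
        have h1 : dot (V j) s < 1 := lt_of_le_of_ne (hVs j) hj
        exact div_pos (by linarith) (by positivity)
    set ε : ℝ := Finset.univ.inf' Finset.univ_nonempty g with hε
    have hεpos : 0 < ε := (Finset.lt_inf'_iff _).mpr fun j _ => hgpos j
    have hmem : ∀ c : ℝ, |c| ≤ ε → dualNorm N (s + c • v) ≤ 1 := by
      intro c hc
      rw [dualNorm_le_one_iff hN hB]
      intro j
      have hdj : dot (V j) (s + c • v) = dot (V j) s + c * dot (V j) v := by
        rw [dot_eq, dotProduct_add, dotProduct_smul, ← dot_eq, ← dot_eq,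
          smul_eq_mul]
      rw [hdj]
      by_cases hj : dot (V j) s = 1
      · have : V j ∈ W := by
          rw [hWdef]
          exact Finset.mem_filter.mpr ⟨Finset.mem_image_of_mem V (Finset.mem_univ j), hj⟩
        rw [hj, hv' _ this, mul_zero, add_zero]
      · have h1 : dot (V j) s < 1 := lt_of_le_of_ne (hVs j) hj
        have h2 : ε ≤ (1 - dot (V j) s) / (|dot (V j) v| + 1) := by
          have h := Finset.inf'_le g (Finset.mem_univ j)
          have hgj : g j = (1 - dot (V j) s) / (|dot (V j) v| + 1) := by
            rw [hg]; simp [hj]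
          rw [hgj] at h
          exact h
        have h3 : 0 < |dot (V j) v| + 1 := by positivity
        have h4 : ε * (|dot (V j) v| + 1) ≤ 1 - dot (V j) s := by
          rw [← le_div_iff₀ h3]
          exact h2
        have h5 : c * dot (V j) v ≤ |c| * |dot (V j) v| := by
          calc c * dot (V j) v ≤ |c * dot (V j) v| := le_abs_self _
          _ = |c| * |dot (V j) v| := abs_mul _ _
        have h6 : |c| * |dot (V j) v| ≤ ε * (|dot (V j) v| + 1) := by
          have := abs_nonneg (dot (V j) v)
          nlinarith [abs_nonneg c]
        linarith
    have hp1 : s + ε • v ∈ F := by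
      have hm1 : s + ε • v ∈ {x | dualNorm N x ≤ 1} := hmem ε (by rw [abs_of_pos hεpos])
      have hm2 : s - ε • v ∈ {x | dualNorm N x ≤ 1} := by
        have := hmem (-ε) (by rw [abs_neg, abs_of_pos hεpos])
        simpa [neg_smul, sub_eq_add_neg] using this
      have e1 : dot a (s + ε • v) + dot a (s - ε • v) = 2 * b₀ := by
        rw [dot_eq, dot_eq, dotProduct_add, dotProduct_sub, ← dot_eq a s, hsa]
        ring
      have l1 := ha _ hm1
      have l2 := ha _ hm2
      rw [hFeq]
      exact ⟨hm1, by linarith⟩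
    have hp2 : s - ε • v ∈ F := by
      have hm1 : s + ε • v ∈ {x | dualNorm N x ≤ 1} := hmem ε (by rw [abs_of_pos hεpos])
      have hm2 : s - ε • v ∈ {x | dualNorm N x ≤ 1} := by
        have := hmem (-ε) (by rw [abs_neg, abs_of_pos hεpos])
        simpa [neg_smul, sub_eq_add_neg] using this
      have e1 : dot a (s + ε • v) + dot a (s - ε • v) = 2 * b₀ := by
        rw [dot_eq, dot_eq, dotProduct_add, dotProduct_sub, ← dot_eq a s, hsa]
        ring
      have l1 := ha _ hm1
      have l2 := ha _ hm2
      rw [hFeq]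
      exact ⟨hm2, by linarith⟩
    have hdiff : (s + ε • v) -ᵥ (s - ε • v) ∈ vectorSpan ℝ F :=
      vsub_mem_vectorSpan ℝ hp1 hp2
    have e2 : (s + ε • v) -ᵥ (s - ε • v) = (2 * ε) • v := by
      show (s + ε • v) - (s - ε • v) = (2 * ε) • v
      module
    rw [e2] at hdiff
    have : v = (2 * ε)⁻¹ • ((2 * ε) • v) := by
      rw [smul_smul, inv_mul_cancel₀ (by positivity), one_smul]
    rw [this]
    exact Submodule.smul_mem _ _ hdiff
  -- dimension counting
  have hUperp := finrank_add_finrank_perp U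
  have hmono : Module.finrank ℝ (perp U) ≤ Module.finrank ℝ (vectorSpan ℝ F) :=
    Submodule.finrank_mono hperp
  have hUbig : X.rank < Module.finrank ℝ U := by omega
  have hker := rank_add_finrank_kerSp X
  have hinf : 1 ≤ Module.finrank ℝ (U ⊓ kerSp X : Submodule ℝ (Fin p → ℝ)) := by
    have h1 := Submodule.finrank_sup_add_finrank_inf_eq U (kerSp X)
    have h2 : Module.finrank ℝ (U ⊔ kerSp X : Submodule ℝ (Fin p → ℝ)) ≤ p := by
      have := Submodule.finrank_le (U ⊔ kerSp X)
      rwa [finrank_pi_fin] at this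
    omega
  have hbot : (U ⊓ kerSp X : Submodule ℝ (Fin p → ℝ)) ≠ ⊥ := by
    intro hB0
    rw [hB0, finrank_bot] at hinf
    omega
  obtain ⟨d, hdmem, hd0⟩ := (Submodule.ne_bot_iff _).mp hbot
  obtain ⟨f, -, hf⟩ := Submodule.mem_span_finset.mp (hUdef ▸ hdmem.1)
  set S : ℝ := ∑ u ∈ W, |f u| with hS
  have hS0 : 0 ≤ S := Finset.sum_nonneg fun u _ => abs_nonneg _
  set ε' : ℝ := 1 / (1 + S) with hε'
  have hε'pos : 0 < ε' := by positivity
  have hcoef : ∀ u ∈ W, 0 ≤ 1 + ε' * f u := by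
    intro u hu
    have h1 : |f u| ≤ S := Finset.single_le_sum (fun v _ => abs_nonneg (f v)) hu
    have h2 : ε' * |f u| ≤ ε' * S := mul_le_mul_of_nonneg_left h1 (le_of_lt hε'pos)
    have h3 : ε' * S < 1 := by
      rw [hε']
      rw [div_mul_eq_mul_div, one_mul, div_lt_one (by positivity)]
      linarith
    have h4 : ε' * f u ≥ -(ε' * |f u|) := by
      have := neg_abs_le (f u)
      nlinarith [le_of_lt hε'pos]
    linarith [abs_nonneg (f u)]
  have hW1 : ∀ u ∈ W, dot s u = 1 := by
    intro u hu
    rw [dot_comm]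
    exact (Finset.mem_filter.mp hu).2
  have hWN : ∀ u ∈ W, N u ≤ 1 := by
    intro u hu
    obtain ⟨j, _, rfl⟩ := Finset.mem_image.mp (Finset.mem_filter.mp hu).1
    exact N_V_le_one hN hB j
  have hpair : ∀ b, dot s b ≤ N b := fun b => dual_pair hN hB hsB b
  set β₁ : Fin p → ℝ := ∑ u ∈ W, (1:ℝ) • u with hβ₁
  set β₂ : Fin p → ℝ := ∑ u ∈ W, (1 + ε' * f u) • u with hβ₂
  have hsplit : β₂ = β₁ + ε' • d := by
    rw [hβ₂, hβ₁, ← hf, Finset.smul_sum]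
    rw [← Finset.sum_add_distrib]
    apply Finset.sum_congr rfl
    intro u _
    rw [add_smul, smul_smul]
  have hd1 : dot s β₁ = N β₁ :=
    cone_dot_eq_N hN hB hpair W hW1 hWN (fun _ => 1) (fun u _ => zero_le_one)
  have hd2 : dot s β₂ = N β₂ :=
    cone_dot_eq_N hN hB hpair W hW1 hWN (fun u => 1 + ε' * f u) hcoef
  have hXd : X.mulVec d = 0 := hdmem.2
  have hXβ : X.mulVec β₂ = X.mulVec β₁ := by
    rw [hsplit, Matrix.mulVec_add, Matrix.mulVec_smul, hXd, smul_zero, add_zero]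
  have hneq : β₁ ≠ β₂ := by
    intro h
    apply hd0
    have : ε' • d = 0 := by
      rw [hsplit] at h
      have := congrArg (fun w => w - β₁) h
      simpa using this.symm
    rcases smul_eq_zero.mp this with h' | h'
    · exact absurd h' (ne_of_gt hε'pos)
    · exact h'
  refine ⟨X.mulVec β₁ + z, β₁, β₂, hneq, ?_, ?_⟩
  · exact opt_of X hN (fun v => by rw [← hs]; exact hpair v) (by rw [← hs]; exact hd1)
  · have h2 := opt_of X hN (z := z) (β := β₂) (fun v => by rw [← hs]; exact hpair v)
      (by rw [← hs]; exact hd2)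
    rwa [hXβ] at h2

end Backward

section Forward

variable {N : (Fin p → ℝ) → ℝ} {V : Fin k → (Fin p → ℝ)}

/-- the set of ball vertices active at `s` -/
noncomputable def actSet (V : Fin k → (Fin p → ℝ)) (s : Fin p → ℝ) : Finset (Fin p → ℝ) :=
  @Finset.filter _ (fun u => dot u s = 1) (Classical.decPred _) (Finset.univ.image V)

lemma mem_actSet {s u : Fin p → ℝ} :
    u ∈ actSet V s ↔ (∃ j, V j = u) ∧ dot u s = 1 := by
  rw [actSet, Finset.mem_filter]
  simp

noncomputable def actSp (V : Fin k → (Fin p → ℝ)) (s : Fin p → ℝ) : Submodule ℝ (Fin p → ℝ) :=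
  Submodule.span ℝ ((actSet V s : Finset (Fin p → ℝ)) : Set (Fin p → ℝ))

lemma same_fit (X : Matrix (Fin n) (Fin p) ℝ) (hN : IsNorm N) {y : Fin n → ℝ}
    {β₁ β₂ : Fin p → ℝ}
    (h1 : ∀ b, obj X N y β₁ ≤ obj X N y b) (h2 : ∀ b, obj X N y β₂ ≤ obj X N y b) :
    X.mulVec β₁ = X.mulVec β₂ ∧ N β₁ = N β₂ := by
  set m : Fin p → ℝ := (1/2 : ℝ) • (β₁ + β₂) with hm
  have hXm : ∀ i, X.mulVec m i = (1/2) * (X.mulVec β₁ i + X.mulVec β₂ i) := by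
    intro i
    rw [hm, Matrix.mulVec_smul, Matrix.mulVec_add]
    simp [Pi.smul_apply, Pi.add_apply, smul_eq_mul]
  have e : ∀ i, (y i - X.mulVec m i)^2
      = (1/2)*(y i - X.mulVec β₁ i)^2 + (1/2)*(y i - X.mulVec β₂ i)^2
        - (1/4)*(X.mulVec β₁ i - X.mulVec β₂ i)^2 := by
    intro i
    rw [hXm i]
    ring
  have eQ : ∑ i, (y i - X.mulVec m i)^2
      = (1/2) * ∑ i, (y i - X.mulVec β₁ i)^2 + (1/2) * ∑ i, (y i - X.mulVec β₂ i)^2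
        - (1/4) * ∑ i, (X.mulVec β₁ i - X.mulVec β₂ i)^2 := by
    rw [Finset.mul_sum, Finset.mul_sum, Finset.mul_sum, ← Finset.sum_add_distrib,
      ← Finset.sum_sub_distrib]
    exact Finset.sum_congr rfl fun i _ => e i
  have hNm : N m ≤ (1/2) * N β₁ + (1/2) * N β₂ := by
    rw [hm, hN.smul]
    rw [abs_of_pos (by norm_num : (0:ℝ) < 1/2)]
    nlinarith [hN.triangle β₁ β₂]
  have hobj12 : obj X N y β₁ = obj X N y β₂ := le_antisymm (h1 β₂) (h2 β₁)
  have hobjm := h1 m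
  have hD : (0:ℝ) ≤ ∑ i, (X.mulVec β₁ i - X.mulVec β₂ i)^2 :=
    Finset.sum_nonneg fun i _ => sq_nonneg _
  have hD0 : ∑ i, (X.mulVec β₁ i - X.mulVec β₂ i)^2 = 0 := by
    simp only [obj] at hobjm hobj12
    rw [eQ] at hobjm
    linarith
  have hXeq : X.mulVec β₁ = X.mulVec β₂ := by
    funext i
    have := (Finset.sum_eq_zero_iff_of_nonneg (fun i (_ : i ∈ Finset.univ) =>
      sq_nonneg (X.mulVec β₁ i - X.mulVec β₂ i))).mp hD0 i (Finset.mem_univ i)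
    have h0 : X.mulVec β₁ i - X.mulVec β₂ i = 0 := by
      exact pow_eq_zero_iff (n := 2) (by norm_num) |>.mp this
    linarith
  refine ⟨hXeq, ?_⟩
  have hQeq : ∑ i, (y i - X.mulVec β₁ i)^2 = ∑ i, (y i - X.mulVec β₂ i)^2 := by
    apply Finset.sum_congr rfl
    intro i _
    rw [hXeq]
  rw [obj, obj, hQeq] at hobj12
  linarith

lemma support_active (hN : IsNorm N) (hB : {x | N x ≤ 1} = convexHull ℝ (Set.range V))
    {s b : Fin p → ℝ} (hpair : ∀ v, dot s v ≤ N v) (hb : N b = 1) (hds : dot s b = 1) :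
    b ∈ actSp V s := by
  classical
  have hrange : Set.range V = ((Finset.univ.image V : Finset (Fin p → ℝ)) : Set (Fin p → ℝ)) := by
    simp
  have hbmem : b ∈ convexHull ℝ ((Finset.univ.image V : Finset (Fin p → ℝ)) : Set (Fin p → ℝ)) := by
    rw [← hrange, ← hB]
    exact le_of_eq hb
  rw [Finset.convexHull_eq] at hbmem
  obtain ⟨w, hw0, hw1, hwc⟩ := hbmem
  have hcm : b = ∑ u ∈ Finset.univ.image V, w u • u := by
    rw [← hwc, Finset.centerMass_eq_of_sum_1 _ id hw1]
    rfl
  have hle : ∀ u ∈ Finset.univ.image V, dot s u ≤ 1 := by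
    intro u hu
    obtain ⟨j, _, rfl⟩ := Finset.mem_image.mp hu
    exact le_trans (hpair (V j)) (N_V_le_one hN hB j)
  have hact : ∀ u ∈ Finset.univ.image V, w u ≠ 0 → dot s u = 1 := by
    intro u₀ hu₀ hw₀
    by_contra hne
    have hlt : dot s u₀ < 1 := lt_of_le_of_ne (hle u₀ hu₀) hne
    have hwpos : 0 < w u₀ := lt_of_le_of_ne (hw0 u₀ hu₀) (Ne.symm hw₀)
    have hsb : dot s b = ∑ u ∈ Finset.univ.image V, w u * dot s u := by
      rw [hcm, dot_comm, dot_sum_left]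
      apply Finset.sum_congr rfl
      intro u _
      rw [dot_eq, smul_dotProduct, smul_eq_mul, ← dot_eq, dot_comm]
    have hlt2 : ∑ u ∈ Finset.univ.image V, w u * dot s u
        < ∑ u ∈ Finset.univ.image V, w u := by
      apply Finset.sum_lt_sum
      · intro u hu
        calc w u * dot s u ≤ w u * 1 := mul_le_mul_of_nonneg_left (hle u hu) (hw0 u hu)
        _ = w u := mul_one _
      · exact ⟨u₀, hu₀, by nlinarith⟩
    rw [hw1] at hlt2
    rw [hds] at hsb
    linarith
  rw [hcm]
  apply Submodule.sum_mem
  intro u hu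
  by_cases hw : w u = 0
  · rw [hw, zero_smul]
    exact Submodule.zero_mem _
  · apply Submodule.smul_mem
    apply Submodule.subset_span
    rw [Finset.mem_coe, mem_actSet]
    obtain ⟨j, _, hj⟩ := Finset.mem_image.mp hu
    exact ⟨⟨j, hj⟩, by rw [dot_comm]; exact hact u hu hw⟩

lemma coord_bound (hN : IsNorm N) (hB : {x | N x ≤ 1} = convexHull ℝ (Set.range V))
    {x : Fin p → ℝ} (hx : ∀ j, dot (V j) x ≤ 1) (i : Fin p) :
    |x i| ≤ N (Pi.single i 1) := by
  have hdual : dualNorm N x ≤ 1 := (dualNorm_le_one_iff hN hB x).mpr hx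
  have h1 : dot x (Pi.single i 1) ≤ N (Pi.single i 1) := dual_pair hN hB hdual _
  have h2 : dot x (-(Pi.single i 1)) ≤ N (-(Pi.single i 1)) := dual_pair hN hB hdual _
  have e1 : dot x (Pi.single i 1) = x i := by
    rw [dot_eq, dotProduct_single, mul_one]
  have e2 : dot x (-(Pi.single i 1)) = -(x i) := by
    rw [dot_eq, dotProduct_neg, dotProduct_single, mul_one]
  have e3 : N (-(Pi.single i 1)) = N (Pi.single i 1) := by
    have hns : (-1 : ℝ) • (Pi.single i 1 : Fin p → ℝ) = -(Pi.single i 1) :=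
      neg_one_smul ℝ _
    rw [← hns, hN.smul]
    norm_num
  rw [e1] at h1
  rw [e2, e3] at h2
  exact abs_le.mpr ⟨by linarith, h1⟩

lemma grow (hN : IsNorm N) (hB : {x | N x ≤ 1} = convexHull ℝ (Set.range V))
    (X : Matrix (Fin n) (Fin p) ℝ) {d : Fin p → ℝ} (hd0 : d ≠ 0) (hdker : d ∈ kerSp X) :
    ∀ (m : ℕ) (s : Fin p → ℝ), s ∈ rowSp X → (∀ j, dot (V j) s ≤ 1) →
      d ∈ actSp V s → p ≤ m + Module.finrank ℝ (actSp V s) →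
      ∃ s' : Fin p → ℝ, s' ∈ rowSp X ∧ (∀ j, dot (V j) s' ≤ 1) ∧
        X.rank < Module.finrank ℝ (actSp V s') := by
  classical
  have hkerpos : 1 ≤ Module.finrank ℝ (kerSp X) := by
    have hne : kerSp X ≠ ⊥ := by
      intro h
      rw [h] at hdker
      exact hd0 (Submodule.mem_bot ℝ |>.mp hdker)
    by_contra hle
    push_neg at hle
    interval_cases h : Module.finrank ℝ (kerSp X)
    · exact hne (Submodule.finrank_eq_zero.mp h)
  have hranklt : X.rank < p := by
    have := rank_add_finrank_kerSp X
    omega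
  intro m
  induction m with
  | zero =>
    intro s hrow hVb hd hbound
    refine ⟨s, hrow, hVb, ?_⟩
    omega
  | succ m ih =>
    intro s hrow hVb hd hbound
    by_cases hcase : X.rank < Module.finrank ℝ (actSp V s)
    · exact ⟨s, hrow, hVb, hcase⟩
    push_neg at hcase
    -- find a direction u in the row space orthogonal to U and to the kernel
    have hinf : 1 ≤ Module.finrank ℝ ((actSp V s ⊓ kerSp X : Submodule ℝ (Fin p → ℝ))) := by
      have hne : (actSp V s ⊓ kerSp X : Submodule ℝ (Fin p → ℝ)) ≠ ⊥ := by
        intro h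
        have : d ∈ (actSp V s ⊓ kerSp X : Submodule ℝ (Fin p → ℝ)) :=
          Submodule.mem_inf.mpr ⟨hd, hdker⟩
        rw [h] at this
        exact hd0 (Submodule.mem_bot ℝ |>.mp this)
      by_contra hle
      push_neg at hle
      interval_cases h : Module.finrank ℝ ((actSp V s ⊓ kerSp X : Submodule ℝ (Fin p → ℝ)))
      · exact hne (Submodule.finrank_eq_zero.mp h)
    have hsuple : Module.finrank ℝ ((actSp V s ⊔ kerSp X : Submodule ℝ (Fin p → ℝ))) + 1 ≤ p := by
      have h1 := Submodule.finrank_sup_add_finrank_inf_eq (actSp V s) (kerSp X)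
      have h2 := rank_add_finrank_kerSp X
      omega
    have hperpsup := finrank_add_finrank_perp ((actSp V s ⊔ kerSp X : Submodule ℝ (Fin p → ℝ)))
    have hperppos : 1 ≤ Module.finrank ℝ (perp (actSp V s ⊔ kerSp X)) := by omega
    have hperpne : perp ((actSp V s ⊔ kerSp X : Submodule ℝ (Fin p → ℝ))) ≠ ⊥ := by
      intro h
      rw [h, finrank_bot] at hperppos
      omega
    obtain ⟨u, humem, hu0⟩ := (Submodule.ne_bot_iff _).mp hperpne
    have huU : ∀ w ∈ actSp V s, dot w u = 0 := by
      intro w hw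
      exact mem_perp.mp humem w (Submodule.mem_sup_left hw)
    have huker : ∀ w ∈ kerSp X, dot w u = 0 := by
      intro w hw
      exact mem_perp.mp humem w (Submodule.mem_sup_right hw)
    have hurow : u ∈ rowSp X := by
      rw [rowSp_eq_perp_kerSp, mem_perp]
      exact huker
    -- positive-direction vertices
    set J : Finset (Fin p → ℝ) :=
      @Finset.filter _ (fun v => 0 < dot v u) (Classical.decPred _) (Finset.univ.image V)
      with hJdef
    have hJne : J.Nonempty := by
      by_contra hJ
      rw [Finset.not_nonempty_iff_eq_empty] at hJ
      have hneg : ∀ j, dot (V j) u ≤ 0 := by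
        intro j
        by_contra hpos
        push_neg at hpos
        have : V j ∈ J := by
          rw [hJdef, Finset.mem_filter]
          exact ⟨Finset.mem_image_of_mem V (Finset.mem_univ j), hpos⟩
        rw [hJ] at this
        exact absurd this (Finset.notMem_empty _)
      obtain ⟨i, hi⟩ : ∃ i, u i ≠ 0 := by
        by_contra hall
        push_neg at hall
        exact hu0 (funext hall)
      set t : ℝ := (N (Pi.single i 1) + |s i| + 1) / |u i| with ht
      have hupos : 0 < |u i| := abs_pos.mpr hi
      have htpos : 0 < t := by
        apply div_pos _ hupos
        have := abs_nonneg (s i)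
        have := hN.nonneg (Pi.single i 1)
        linarith
      have hmem : ∀ j, dot (V j) (s + t • u) ≤ 1 := by
        intro j
        have : dot (V j) (s + t • u) = dot (V j) s + t * dot (V j) u := by
          rw [dot_eq, dotProduct_add, dotProduct_smul, ← dot_eq, ← dot_eq,
            smul_eq_mul]
        rw [this]
        have h1 := hneg j
        have h2 := hVb j
        nlinarith
      have hcb := coord_bound hN hB hmem i
      have he : (s + t • u) i = s i + t * u i := by
        simp [Pi.add_apply, Pi.smul_apply, smul_eq_mul]
      rw [he] at hcb
      have habs : |t * u i| - |s i| ≤ |t * u i + s i| := by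
        have := abs_sub_abs_le_abs_sub (t * u i) (-(s i))
        simpa [sub_neg_eq_add, abs_neg] using this
      have htu : |t * u i| = N (Pi.single i 1) + |s i| + 1 := by
        rw [abs_mul, abs_of_pos htpos, ht, div_mul_cancel₀ _ (ne_of_gt hupos)]
      have : |s i + t * u i| = |t * u i + s i| := by rw [add_comm]
      rw [this] at hcb
      linarith
    have hJlt : ∀ v ∈ J, dot v s < 1 := by
      intro v hv
      rw [hJdef, Finset.mem_filter] at hv
      have hle : dot v s ≤ 1 := by
        obtain ⟨j, _, rfl⟩ := Finset.mem_image.mp hv.1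
        exact hVb j
      rcases lt_or_eq_of_le hle with h | h
      · exact h
      · exfalso
        have : v ∈ actSet V s := by
          rw [mem_actSet]
          obtain ⟨j, _, rfl⟩ := Finset.mem_image.mp hv.1
          exact ⟨⟨j, rfl⟩, h⟩
        have := huU v (Submodule.subset_span this)
        linarith [hv.2]
    set t' : ℝ := J.inf' hJne (fun v => (1 - dot v s) / (dot v u)) with ht'
    have ht'pos : 0 < t' := by
      rw [ht']
      rw [Finset.lt_inf'_iff]
      intro v hv
      have h1 := hJlt v hv
      have hv' := hv
      rw [hJdef, Finset.mem_filter] at hv'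
      exact div_pos (by linarith) hv'.2
    set s' : Fin p → ℝ := s + t' • u with hs'
    have hs'row : s' ∈ rowSp X := Submodule.add_mem _ hrow (Submodule.smul_mem _ _ hurow)
    have hdots' : ∀ v : Fin p → ℝ, dot v s' = dot v s + t' * dot v u := by
      intro v
      rw [hs', dot_eq, dotProduct_add, dotProduct_smul, ← dot_eq, ← dot_eq,
        smul_eq_mul]
    have hs'B : ∀ j, dot (V j) s' ≤ 1 := by
      intro j
      rw [hdots']
      by_cases hpos : 0 < dot (V j) u
      · have hvJ : V j ∈ J := by
          rw [hJdef, Finset.mem_filter]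
          exact ⟨Finset.mem_image_of_mem V (Finset.mem_univ j), hpos⟩
        have h1 : t' ≤ (1 - dot (V j) s) / (dot (V j) u) := by
          rw [ht']
          exact Finset.inf'_le _ hvJ
        have h2 : t' * dot (V j) u ≤ 1 - dot (V j) s := by
          rw [← le_div_iff₀ hpos]
          exact h1
        linarith
      · push_neg at hpos
        have := hVb j
        nlinarith
    have hsub : actSet V s ⊆ actSet V s' := by
      intro v hv
      rw [mem_actSet] at hv ⊢
      refine ⟨hv.1, ?_⟩
      rw [hdots', hv.2, huU v (Submodule.subset_span (Finset.mem_coe.mpr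
        ((mem_actSet).mpr hv))), mul_zero, add_zero]
    have hUle : actSp V s ≤ actSp V s' :=
      Submodule.span_mono (Finset.coe_subset.mpr hsub)
    obtain ⟨v₀, hv₀J, hv₀eq⟩ := Finset.exists_mem_eq_inf' hJne
      (fun v => (1 - dot v s) / (dot v u))
    have hv₀J' := hv₀J
    rw [hJdef, Finset.mem_filter] at hv₀J'
    have hv₀u : 0 < dot v₀ u := hv₀J'.2
    have hv₀act : v₀ ∈ actSet V s' := by
      rw [mem_actSet]
      obtain ⟨j, _, hj⟩ := Finset.mem_image.mp hv₀J'.1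
      refine ⟨⟨j, hj⟩, ?_⟩
      rw [hdots']
      rw [show t' = (1 - dot v₀ s) / (dot v₀ u) from hv₀eq]
      rw [div_mul_cancel₀ _ (ne_of_gt hv₀u)]
      ring
    have hv₀notin : v₀ ∉ actSp V s := by
      intro h
      have := huU v₀ h
      linarith
    have hstrict : actSp V s < actSp V s' :=
      lt_of_le_of_ne hUle (by
        intro h
        exact hv₀notin (h ▸ Submodule.subset_span (Finset.mem_coe.mpr hv₀act)))
    have hfr : Module.finrank ℝ (actSp V s) < Module.finrank ℝ (actSp V s') :=
      Submodule.finrank_lt_finrank_of_lt hstrict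
    exact ih s' hs'row hs'B (hUle hd) (by omega)

end Forward

section Assemble

variable {N : (Fin p → ℝ) → ℝ} {V : Fin k → (Fin p → ℝ)}

lemma forward (X : Matrix (Fin n) (Fin p) ℝ) (hN : IsNorm N)
    (hB : {x | N x ≤ 1} = convexHull ℝ (Set.range V))
    {y : Fin n → ℝ} {β₁ β₂ : Fin p → ℝ} (hne : β₁ ≠ β₂)
    (h1 : ∀ b, obj X N y β₁ ≤ obj X N y b) (h2 : ∀ b, obj X N y β₂ ≤ obj X N y b) :
    ∃ F : Set (Fin p → ℝ), F.Nonempty ∧ IsFace {s | dualNorm N s ≤ 1} F ∧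
      (∃ z : Fin n → ℝ, Xᵀ.mulVec z ∈ F) ∧
      X.rank + Module.finrank ℝ (vectorSpan ℝ F) < p := by
  classical
  obtain ⟨hXeq, hNeq⟩ := same_fit X hN h1 h2
  set s := Xᵀ.mulVec (y - X.mulVec β₁) with hs
  obtain ⟨hpair, hds1⟩ := opt_nec X hN h1
  rw [← hs] at hpair hds1
  have hds2 : dot s β₂ = N β₂ := by
    have h := (opt_nec X hN h2).2
    rw [← hXeq] at h
    rw [hs]
    exact h
  have hc : 0 < N β₁ := by
    rcases lt_or_eq_of_le (hN.nonneg β₁) with h | h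
    · exact h
    · exfalso
      have hb10 : β₁ = 0 := (hN.eq_zero_iff β₁).mp h.symm
      have hb20 : β₂ = 0 := (hN.eq_zero_iff β₂).mp (by rw [← hNeq, ← h])
      exact hne (hb10.trans hb20.symm)
  set c := N β₁ with hcdef
  have hcinv : c⁻¹ * c = 1 := inv_mul_cancel₀ (ne_of_gt hc)
  have hb1 : (c⁻¹ • β₁) ∈ actSp V s := by
    apply support_active hN hB hpair
    · rw [hN.smul, abs_of_pos (inv_pos.mpr hc)]; exact hcinv
    · rw [dot_eq, dotProduct_smul, ← dot_eq, smul_eq_mul, hds1]; exact hcinv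
  have hb2 : (c⁻¹ • β₂) ∈ actSp V s := by
    apply support_active hN hB hpair
    · rw [hN.smul, abs_of_pos (inv_pos.mpr hc), ← hNeq]; exact hcinv
    · rw [dot_eq, dotProduct_smul, ← dot_eq, smul_eq_mul, hds2, ← hNeq]; exact hcinv
  set d : Fin p → ℝ := c⁻¹ • β₂ - c⁻¹ • β₁ with hd
  have hd0 : d ≠ 0 := by
    rw [hd]
    intro h
    have h2' : c⁻¹ • β₂ = c⁻¹ • β₁ := by
      have := sub_eq_zero.mp h
      exact this
    have := smul_right_injective (Fin p → ℝ) (inv_ne_zero (ne_of_gt hc)) h2'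
    exact hne this.symm
  have hdker : d ∈ kerSp X := by
    show X.mulVec d = 0
    rw [hd, Matrix.mulVec_sub, Matrix.mulVec_smul, Matrix.mulVec_smul, hXeq, sub_self]
  have hdact : d ∈ actSp V s := Submodule.sub_mem _ hb2 hb1
  have hsrow : s ∈ rowSp X := ⟨y - X.mulVec β₁, rfl⟩
  have hVs : ∀ j, dot (V j) s ≤ 1 := by
    intro j
    rw [dot_comm]
    exact le_trans (hpair (V j)) (N_V_le_one hN hB j)
  obtain ⟨s', hs'row, hs'B, hs'rank⟩ :=
    grow hN hB X hd0 hdker p s hsrow hVs hdact (Nat.le_add_right p _)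
  -- build the face
  set W' : Finset (Fin p → ℝ) := actSet V s' with hW'
  set a : Fin p → ℝ := ∑ u ∈ W', u with ha
  set b₀ : ℝ := (W'.card : ℝ) with hb₀
  have hNu : ∀ u ∈ W', N u ≤ 1 := by
    intro u hu
    obtain ⟨⟨j, hj⟩, _⟩ := mem_actSet.mp (hW' ▸ hu)
    rw [← hj]
    exact N_V_le_one hN hB j
  have hdotax : ∀ x : Fin p → ℝ, dot a x = ∑ u ∈ W', dot u x := by
    intro x
    rw [ha]
    exact dot_sum_left W' (fun u => u) x
  have hub : ∀ x ∈ {x : Fin p → ℝ | dualNorm N x ≤ 1}, ∀ u ∈ W', dot u x ≤ 1 := by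
    intro x hx u hu
    rw [dot_comm]
    exact le_trans (dual_pair hN hB hx u) (hNu u hu)
  have hfa : ∀ x ∈ {x : Fin p → ℝ | dualNorm N x ≤ 1}, dot a x ≤ b₀ := by
    intro x hx
    rw [hdotax, hb₀]
    calc ∑ u ∈ W', dot u x ≤ ∑ u ∈ W', (1:ℝ) :=
      Finset.sum_le_sum (fun u hu => hub x hx u hu)
    _ = (W'.card : ℝ) := by rw [Finset.sum_const, nsmul_eq_mul, mul_one]
  refine ⟨{x ∈ {x : Fin p → ℝ | dualNorm N x ≤ 1} | dot a x = b₀}, ?_, ⟨a, b₀, hfa, rfl⟩,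
    ?_, ?_⟩
  · -- nonempty : s' belongs
    refine ⟨s', ?_⟩
    have hs'1 : dualNorm N s' ≤ 1 := (dualNorm_le_one_iff hN hB s').mpr hs'B
    have hs'a : dot a s' = b₀ := by
      rw [hdotax, hb₀]
      have : ∀ u ∈ W', dot u s' = 1 := fun u hu => (mem_actSet.mp (hW' ▸ hu)).2
      rw [Finset.sum_congr rfl this, Finset.sum_const, nsmul_eq_mul, mul_one]
    exact ⟨hs'1, hs'a⟩
  · -- reachable from the row space
    obtain ⟨z, hz⟩ := hs'row
    refine ⟨z, ?_⟩
    have hz' : Xᵀ.mulVec z = s' := hz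
    rw [hz']
    have hs'1 : dualNorm N s' ≤ 1 := (dualNorm_le_one_iff hN hB s').mpr hs'B
    have hs'a : dot a s' = b₀ := by
      rw [hdotax, hb₀]
      have : ∀ u ∈ W', dot u s' = 1 := fun u hu => (mem_actSet.mp (hW' ▸ hu)).2
      rw [Finset.sum_congr rfl this, Finset.sum_const, nsmul_eq_mul, mul_one]
    exact ⟨hs'1, hs'a⟩
  · -- dimension bound
    set F : Set (Fin p → ℝ) := {x ∈ {x : Fin p → ℝ | dualNorm N x ≤ 1} | dot a x = b₀}
      with hF
    have hall : ∀ x ∈ F, ∀ u ∈ W', dot u x = 1 := by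
      intro x hx u hu
      obtain ⟨hx1, hx2⟩ := hx
      by_contra hne'
      have hlt : dot u x < 1 := lt_of_le_of_ne (hub x hx1 u hu) hne'
      have : ∑ v ∈ W', dot v x < ∑ v ∈ W', (1:ℝ) :=
        Finset.sum_lt_sum (fun v hv => hub x hx1 v hv) ⟨u, hu, hlt⟩
      rw [Finset.sum_const, nsmul_eq_mul, mul_one] at this
      rw [hdotax] at hx2
      rw [hb₀] at hx2
      linarith [le_of_eq hx2]
    have hvs : vectorSpan ℝ F ≤ perp (actSp V s') := by
      rw [vectorSpan_def]
      apply Submodule.span_le.mpr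
      rintro w ⟨x, hx, x', hx', rfl⟩
      show x - x' ∈ perp (actSp V s')
      rw [actSp]
      rw [mem_perp_span]
      intro u hu
      rw [dot_eq, dotProduct_sub, ← dot_eq, ← dot_eq]
      rw [hall x hx u hu, hall x' hx' u hu, sub_self]
    have hfrk := finrank_add_finrank_perp (actSp V s')
    have hmono := Submodule.finrank_mono hvs
    omega

end Assemble

end PUC

open PUC in
theorem penalized_uniqueness_characterization {n p k : ℕ}
    (X : Matrix (Fin n) (Fin p) ℝ) (N : (Fin p → ℝ) → ℝ) (hN : IsNorm N)
    (V : Fin k → (Fin p → ℝ)) (hB : {x | N x ≤ 1} = convexHull ℝ (Set.range V)) :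
    (∃ (y : Fin n → ℝ) (β₁ β₂ : Fin p → ℝ), β₁ ≠ β₂ ∧
        (∀ b, obj X N y β₁ ≤ obj X N y b) ∧ (∀ b, obj X N y β₂ ≤ obj X N y b)) ↔
      ∃ F : Set (Fin p → ℝ), F.Nonempty ∧ IsFace {s | dualNorm N s ≤ 1} F ∧
        (∃ z : Fin n → ℝ, Xᵀ.mulVec z ∈ F) ∧
        X.rank + Module.finrank ℝ (vectorSpan ℝ F) < p := by
  constructor
  · rintro ⟨y, β₁, β₂, hne, h1, h2⟩
    exact forward X hN hB hne h1 h2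
  · rintro ⟨F, hFne, hface, ⟨z, hz⟩, hdim⟩
    exact backward X hN hB F hface z hz hdim
end

section
/- Let X ∈ ℝ^{n×p} and σ ∈ {−1,0,1}^p. There exists y ∈ col(X) and a basis pursuit minimizer β̂ for y with sign(β̂) = σ if and only if the implication (Xb = Xσ ⟹ ‖b‖₁ ≥ ‖σ‖₁) holds. -/
open Finset Matrix

theorem bp_accessible_sign_characterization {n p : ℕ} (X : Matrix (Fin n) (Fin p) ℝ)
    (σ : Fin p → ℝ) (hσ : ∀ j, σ j = -1 ∨ σ j = 0 ∨ σ j = 1) :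
    (∃ (y : Fin n → ℝ) (β : Fin p → ℝ), (∃ b, X.mulVec b = y) ∧ IsBPSol X y β ∧
        (∀ j, Real.sign (β j) = σ j)) ↔
      ∀ b : Fin p → ℝ, X.mulVec b = X.mulVec σ → l1norm σ ≤ l1norm b := by
  constructor
  · rintro ⟨y, β, -, ⟨hβy, hmin⟩, hsgn⟩ b hb
    by_contra hlt
    push_neg at hlt
    set s : Finset (Fin p) := Finset.univ.filter (fun j => σ j ≠ 0) with hs
    rcases s.eq_empty_or_nonempty with he | hne
    · have hσ0 : ∀ j, σ j = 0 := by
        intro j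
        by_contra hj
        have hmem : j ∈ s := by simp [hs, hj]
        rw [he] at hmem
        exact absurd hmem (Finset.notMem_empty j)
      have h0 : l1norm σ = 0 := by simp [l1norm, hσ0]
      have hb0 : 0 ≤ l1norm b := Finset.sum_nonneg fun j _ => abs_nonneg _
      rw [h0] at hlt; linarith
    · set d : Fin p → ℝ := b - σ with hd
      set t : ℝ := s.inf' hne (fun j => |β j| / (|d j| + 1)) with ht
      have hβne : ∀ j ∈ s, β j ≠ 0 := by
        intro j hj h0
        rw [Finset.mem_filter] at hj
        exact hj.2 (by rw [← hsgn j, h0, Real.sign_zero])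
      have htpos : 0 < t := by
        rw [ht, Finset.lt_inf'_iff]
        intro j hj
        have h1 : 0 < |β j| := abs_pos.mpr (hβne j hj)
        positivity
      have htle : ∀ j ∈ s, t * |d j| < |β j| := by
        intro j hj
        have h1 : t ≤ |β j| / (|d j| + 1) := Finset.inf'_le _ hj
        have h2 : 0 < |d j| + 1 := by positivity
        rw [le_div_iff₀ h2] at h1
        nlinarith [abs_nonneg (d j)]
      have key : ∀ j, |β j + t * d j| ≤ |β j| + t * (|b j| - |σ j|) := by
        intro j
        have hdj : d j = b j - σ j := rfl
        rcases hσ j with h1 | h1 | h1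
        · have hjs : j ∈ s := by simp [hs, h1]
          have hneg : β j < 0 := by
            have := hsgn j
            rw [h1] at this
            rcases lt_trichotomy (β j) 0 with h | h | h
            · exact h
            · rw [h, Real.sign_zero] at this; norm_num at this
            · rw [Real.sign_of_pos h] at this; norm_num at this
          have habs : |β j| = -β j := abs_of_neg hneg
          have hd2 := htle j hjs
          rw [habs] at hd2
          have hltz : β j + t * d j < 0 := by
            have : t * d j ≤ t * |d j| := by
              have := le_abs_self (d j)
              nlinarith
            linarith
          rw [abs_of_neg hltz, habs, hdj, h1]
          have := neg_abs_le (b j)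
          rw [abs_neg, abs_one]
          nlinarith
        · have hβ0 : β j = 0 := by
            have := hsgn j
            rw [h1] at this
            rcases lt_trichotomy (β j) 0 with h | h | h
            · rw [Real.sign_of_neg h] at this; norm_num at this
            · exact h
            · rw [Real.sign_of_pos h] at this; norm_num at this
          rw [hβ0, hdj, h1]
          rw [zero_add, sub_zero, abs_mul, abs_of_pos htpos]
          simp
        · have hjs : j ∈ s := by simp [hs, h1]
          have hpos : 0 < β j := by
            have := hsgn j
            rw [h1] at this
            rcases lt_trichotomy (β j) 0 with h | h | h
            · rw [Real.sign_of_neg h] at this; norm_num at this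
            · rw [h, Real.sign_zero] at this; norm_num at this
            · exact h
          have habs : |β j| = β j := abs_of_pos hpos
          have hd2 := htle j hjs
          rw [habs] at hd2
          have hgtz : 0 < β j + t * d j := by
            have : -(t * d j) ≤ t * |d j| := by
              have := neg_abs_le (d j)
              nlinarith
            linarith
          rw [abs_of_pos hgtz, habs, hdj, h1]
          have := le_abs_self (b j)
          rw [abs_one]
          nlinarith
      have hXeq : X.mulVec (fun j => β j + t * d j) = y := by
        have heq : (fun j => β j + t * d j) = β + t • (b - σ) := by
          funext j; simp [hd, smul_eq_mul]
        rw [heq, mulVec_add, mulVec_smul, mulVec_sub, hb, sub_self, smul_zero, add_zero, hβy]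
      have hle := hmin _ hXeq
      have hsum : l1norm (fun j => β j + t * d j) ≤ l1norm β + t * (l1norm b - l1norm σ) := by
        unfold l1norm
        calc ∑ j, |β j + t * d j| ≤ ∑ j, (|β j| + t * (|b j| - |σ j|)) :=
              Finset.sum_le_sum (fun j _ => key j)
          _ = ∑ j, |β j| + t * ((∑ j, |b j|) - ∑ j, |σ j|) := by
              rw [Finset.sum_add_distrib, ← Finset.mul_sum, Finset.sum_sub_distrib]
      unfold l1norm at hle hsum hlt
      nlinarith
  · intro h
    refine ⟨X.mulVec σ, σ, ⟨σ, rfl⟩, ⟨rfl, h⟩, fun j => ?_⟩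
    rcases hσ j with h1 | h1 | h1
    · rw [h1, Real.sign_of_neg (by norm_num)]
    · rw [h1, Real.sign_zero]
    · rw [h1, Real.sign_of_pos (by norm_num)]
end

section
/- Let s ∈ ℝ^p, X ∈ ℝ^{n×p}, and let ‖·‖ be a norm on ℝ^p. The row space of X intersects the subdifferential of ‖·‖ at s if and only if for all b ∈ ℝ^p, Xb = Xs implies ‖b‖ ≥ ‖s‖. -/
open Finset Matrix

lemma dot_transpose_mulVec {n p : ℕ} (X : Matrix (Fin n) (Fin p) ℝ)
    (z : Fin n → ℝ) (u : Fin p → ℝ) :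
    dot (Xᵀ.mulVec z) u = ∑ j, z j * X.mulVec u j := by
  unfold dot
  simp only [Matrix.mulVec, dotProduct, Matrix.transpose_apply]
  calc ∑ i, (∑ j, X j i * z j) * u i
      = ∑ i, ∑ j, z j * (X j i * u i) := by
        refine Finset.sum_congr rfl fun i _ => ?_
        rw [Finset.sum_mul]
        exact Finset.sum_congr rfl fun j _ => by ring
    _ = ∑ j, ∑ i, z j * (X j i * u i) := Finset.sum_comm
    _ = ∑ j, z j * ∑ i, X j i * u i := by
        refine Finset.sum_congr rfl fun j _ => ?_
        rw [Finset.mul_sum]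

theorem row_space_meets_subdiff_iff {n p : ℕ} (X : Matrix (Fin n) (Fin p) ℝ)
    (N : (Fin p → ℝ) → ℝ) (hN : IsNorm N) (s : Fin p → ℝ) :
    (∃ z : Fin n → ℝ, Xᵀ.mulVec z ∈ subdiff N s) ↔
      ∀ b : Fin p → ℝ, X.mulVec b = X.mulVec s → N s ≤ N b := by
  have N0 : N 0 = 0 := (hN.eq_zero_iff 0).mpr rfl
  constructor
  · rintro ⟨z, hz⟩ b hb
    have h1 := hz b
    have h2 : dot (Xᵀ.mulVec z) (b - s) = 0 := by
      rw [dot_transpose_mulVec, Matrix.mulVec_sub, hb]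
      simp
    linarith [h1, h2.symm ▸ h1]
  · intro h
    set K := LinearMap.ker X.mulVecLin with hK
    by_cases hs : s ∈ K
    · -- then N s = 0, so s = 0
      have hXs : X.mulVec s = 0 := hs
      have h0 : N s ≤ N 0 := h 0 (by rw [Matrix.mulVec_zero, hXs])
      have hNs : N s = 0 := le_antisymm (by linarith) (hN.nonneg s)
      have hs0 : s = 0 := (hN.eq_zero_iff s).mp hNs
      refine ⟨0, fun y => ?_⟩
      rw [Matrix.mulVec_zero, hs0, N0]
      have : dot 0 (y - 0) = 0 := by unfold dot; simp
      rw [this]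
      simpa using hN.nonneg y
    · have hsne : s ≠ 0 := by
        intro h0; exact hs (by rw [h0]; exact K.zero_mem)
      set f : (Fin p → ℝ) →ₗ.[ℝ] ℝ := LinearPMap.mkSpanSingleton s (N s) hsne with hf
      set g0 : (Fin p → ℝ) →ₗ.[ℝ] ℝ := ⟨K, 0⟩ with hg0
      have hdisj : Disjoint f.domain g0.domain := by
        exact (Submodule.disjoint_span_singleton' hsne).mpr hs |>.symm
      have hcompat := LinearPMap.sup_h_of_disjoint f g0 hdisj
      set F := f.sup g0 hcompat with hF
      have hFle : ∀ x : F.domain, F x ≤ N x := by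
        rintro ⟨x, hx⟩
        have hx' : x ∈ f.domain ⊔ g0.domain := hx
        obtain ⟨y, hy, k, hk, rfl⟩ := Submodule.mem_sup.mp hx'
        obtain ⟨c, rfl⟩ := Submodule.mem_span_singleton.mp hy
        have hval : F ⟨c • s + k, hx⟩ = c * N s := by
          rw [show F ⟨c • s + k, hx⟩ = f ⟨c • s, hy⟩ + g0 ⟨k, hk⟩ from
            LinearPMap.sup_apply hcompat ⟨c • s, hy⟩ ⟨k, hk⟩ ⟨c • s + k, hx⟩ rfl]
          have h1 : f ⟨c • s, hy⟩ = c • N s := LinearPMap.mkSpanSingleton'_apply _ _ _ c _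
          have h2 : g0 ⟨k, hk⟩ = 0 := rfl
          rw [h1, h2, add_zero, smul_eq_mul]
        rw [hval]
        rcases le_or_gt c 0 with hc | hc
        · have := mul_nonpos_of_nonpos_of_nonneg hc (hN.nonneg s)
          exact le_trans this (hN.nonneg _)
        · have hXk : X.mulVec k = 0 := hk
          have hb : X.mulVec (s + c⁻¹ • k) = X.mulVec s := by
            rw [Matrix.mulVec_add, Matrix.mulVec_smul, hXk]
            simp
          have h1 : N s ≤ N (s + c⁻¹ • k) := h _ hb
          calc c * N s ≤ c * N (s + c⁻¹ • k) :=
                mul_le_mul_of_nonneg_left h1 hc.le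
            _ = N (c • (s + c⁻¹ • k)) := by rw [hN.smul, abs_of_pos hc]
            _ = N (c • s + k) := by
                congr 1
                rw [smul_add, smul_smul, mul_inv_cancel₀ hc.ne', one_smul]
      obtain ⟨g, hg_ext, hg_le⟩ := exists_extension_of_le_sublinear F N
        (fun c hc x => by rw [hN.smul, abs_of_pos hc]) hN.triangle hFle
      -- g s = N s
      have hsF : s ∈ F.domain :=
        Submodule.mem_sup_left (Submodule.mem_span_singleton_self s)
      have hgs : g s = N s := by
        rw [hg_ext ⟨s, hsF⟩]
        have := (LinearPMap.left_le_sup f g0 hcompat).2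
          (x := ⟨s, Submodule.mem_span_singleton_self s⟩) (y := ⟨s, hsF⟩) rfl
        rw [← this]
        exact LinearPMap.mkSpanSingleton_apply ℝ ℝ hsne (N s)
      -- g vanishes on K
      have hgK : ∀ x ∈ K, g x = 0 := by
        intro x hx
        have hxF : x ∈ F.domain := Submodule.mem_sup_right hx
        rw [hg_ext ⟨x, hxF⟩]
        have := (LinearPMap.right_le_sup f g0 hcompat).2
          (x := ⟨x, hx⟩) (y := ⟨x, hxF⟩) rfl
        rw [← this]
        rfl
      -- factor g through X.mulVecLin
      have hmem : g ∈ LinearMap.range (X.mulVecLin).dualMap := by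
        rw [LinearMap.range_dualMap_eq_dualAnnihilator_ker]
        exact (Submodule.mem_dualAnnihilator g).mpr hgK
      obtain ⟨w, hw⟩ := hmem
      have hw' : ∀ y, w (X.mulVec y) = g y := by
        intro y
        have := LinearMap.congr_fun hw y
        rwa [LinearMap.dualMap_apply, Matrix.mulVecLin_apply] at this
      refine ⟨fun j => w (fun i => if j = i then 1 else 0), ?_⟩
      intro y
      have hdot : dot (Xᵀ.mulVec (fun j => w (fun i => if j = i then 1 else 0))) (y - s)
          = g (y - s) := by
        rw [dot_transpose_mulVec, ← hw' (y - s),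
          LinearMap.pi_apply_eq_sum_univ w (X.mulVec (y - s))]
        congr 1; ext j
        rw [smul_eq_mul, mul_comm]
      rw [hdot, map_sub, hgs]
      have := hg_le y
      linarith
end

section
/- Let w ∈ ℝ^p with w₁ ≥ w₂ ≥ ⋯ ≥ w_p ≥ 0 and w₁ > 0, and let ‖x‖_w = Σ_j w_j |x|_{(j)} denote the SLOPE (sorted ℓ₁) norm, where |x|_{(1)} ≥ ⋯ ≥ |x|_{(p)} are the sorted absolute values. Then the unit ball of the dual norm of ‖·‖_w equals the signed permutahedron P_w^± = conv{(σ₁ w_{π(1)},…,σ_p w_{π(p)}) : σ ∈ {−1,1}^p, π a permutation of [p]}. -/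
open Finset Matrix

/-- The SLOPE (sorted ℓ¹) norm: for antitone nonnegative weights `w`, this equals
`∑ j, w j * |x|_(j)` where `|x|_(1) ≥ … ≥ |x|_(p)` are the sorted absolute values,
by the rearrangement inequality. -/
noncomputable def slopeNorm {p : ℕ} (w : Fin p → ℝ) (x : Fin p → ℝ) : ℝ :=
  ⨆ π : Equiv.Perm (Fin p), ∑ j, w j * |x (π j)|

/-- The signed permutahedron `P_w^±`. -/
noncomputable def signPermutahedron {p : ℕ} (w : Fin p → ℝ) : Set (Fin p → ℝ) :=
  convexHull ℝ {v | ∃ (σ : Fin p → ℝ) (π : Equiv.Perm (Fin p)),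
    (∀ j, σ j = 1 ∨ σ j = -1) ∧ v = fun j => σ j * w (π j)}

section aux
variable {p : ℕ}

lemma slope_term_le (w s : Fin p → ℝ) (π : Equiv.Perm (Fin p)) :
    ∑ j, w j * |s (π j)| ≤ slopeNorm w s := by
  unfold slopeNorm
  exact le_ciSup (f := fun π : Equiv.Perm (Fin p) => ∑ j, w j * |s (π j)|)
    ((Set.finite_range _).bddAbove) π

lemma slopeNorm_nonneg (w : Fin p → ℝ) (hw : ∀ i, 0 ≤ w i) (s : Fin p → ℝ) :
    0 ≤ slopeNorm w s :=
  le_trans (Finset.sum_nonneg fun j _ => mul_nonneg (hw j) (abs_nonneg _))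
    (slope_term_le w s 1)

lemma w0_abs_le (hp : 0 < p) (w : Fin p → ℝ) (hw : ∀ i, 0 ≤ w i) (s : Fin p → ℝ) (i : Fin p) :
    w ⟨0, hp⟩ * |s i| ≤ slopeNorm w s := by
  refine le_trans ?_ (slope_term_le w s (Equiv.swap ⟨0, hp⟩ i))
  have := Finset.single_le_sum (f := fun j => w j * |s ((Equiv.swap ⟨0, hp⟩ i) j)|)
      (fun j _ => mul_nonneg (hw j) (abs_nonneg _)) (Finset.mem_univ ⟨0, hp⟩)
  simpa [Equiv.swap_apply_left] using this

lemma bdd_dual (hp : 0 < p) (w : Fin p → ℝ) (hw : ∀ i, 0 ≤ w i) (hpos : 0 < w ⟨0, hp⟩)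
    (x : Fin p → ℝ) : BddAbove {r | ∃ s, slopeNorm w s ≤ 1 ∧ r = dot s x} := by
  refine ⟨(1 / w ⟨0, hp⟩) * ∑ i, |x i|, ?_⟩
  rintro r ⟨s, hs, rfl⟩
  have hb : ∀ i, |s i| ≤ 1 / w ⟨0, hp⟩ := by
    intro i
    rw [le_div_iff₀ hpos]
    calc |s i| * w ⟨0, hp⟩ = w ⟨0, hp⟩ * |s i| := mul_comm _ _
      _ ≤ slopeNorm w s := w0_abs_le hp w hw s i
      _ ≤ 1 := hs
  calc dot s x = ∑ i, s i * x i := rfl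
    _ ≤ ∑ i, (1 / w ⟨0, hp⟩) * |x i| := by
        refine Finset.sum_le_sum fun i _ => ?_
        calc s i * x i ≤ |s i * x i| := le_abs_self _
          _ = |s i| * |x i| := abs_mul _ _
          _ ≤ (1 / w ⟨0, hp⟩) * |x i| :=
              mul_le_mul_of_nonneg_right (hb i) (abs_nonneg _)
    _ = (1 / w ⟨0, hp⟩) * ∑ i, |x i| := by rw [Finset.mul_sum]

lemma dot_le_dualNorm (hp : 0 < p) (w : Fin p → ℝ) (hw : ∀ i, 0 ≤ w i)
    (hpos : 0 < w ⟨0, hp⟩) (x s' : Fin p → ℝ) (hs' : slopeNorm w s' ≤ 1) :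
    dot s' x ≤ dualNorm (slopeNorm w) x :=
  le_csSup (bdd_dual hp w hw hpos x) ⟨s', hs', rfl⟩

lemma dot_vertex_le (w : Fin p → ℝ) (hw : ∀ i, 0 ≤ w i) (σ : Fin p → ℝ)
    (π : Equiv.Perm (Fin p)) (hσ : ∀ j, σ j = 1 ∨ σ j = -1)
    (s : Fin p → ℝ) (hs : slopeNorm w s ≤ 1) :
    dot s (fun j => σ j * w (π j)) ≤ 1 := by
  have h1 : dot s (fun j => σ j * w (π j)) ≤ ∑ j, |s j| * w (π j) := by
    unfold dot
    refine Finset.sum_le_sum fun j _ => ?_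
    simp only
    rcases hσ j with h | h <;> rw [h] <;>
      nlinarith [le_abs_self (s j), neg_abs_le (s j), hw (π j)]
  have h2 : ∑ j, |s j| * w (π j) = ∑ j, w j * |s (π⁻¹ j)| :=
    Fintype.sum_equiv π _ _ (fun j => by simp [mul_comm])
  calc dot s (fun j => σ j * w (π j)) ≤ ∑ j, |s j| * w (π j) := h1
    _ = ∑ j, w j * |s (π⁻¹ j)| := h2
    _ ≤ slopeNorm w s := slope_term_le w s π⁻¹
    _ ≤ 1 := hs

lemma vertex_mem_ball (w : Fin p → ℝ) (hw : ∀ i, 0 ≤ w i) (σ : Fin p → ℝ)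
    (π : Equiv.Perm (Fin p)) (hσ : ∀ j, σ j = 1 ∨ σ j = -1) :
    dualNorm (slopeNorm w) (fun j => σ j * w (π j)) ≤ 1 := by
  refine Real.sSup_le ?_ zero_le_one
  rintro r ⟨s, hs, rfl⟩
  exact dot_vertex_le w hw σ π hσ s hs

lemma ball_convex (hp : 0 < p) (w : Fin p → ℝ) (hw : ∀ i, 0 ≤ w i)
    (hpos : 0 < w ⟨0, hp⟩) :
    Convex ℝ {s : Fin p → ℝ | dualNorm (slopeNorm w) s ≤ 1} := by
  intro s₁ hs₁ s₂ hs₂ a b ha hb hab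
  refine Real.sSup_le ?_ zero_le_one
  rintro r ⟨s', hs', rfl⟩
  have h1 : dot s' s₁ ≤ 1 := le_trans (dot_le_dualNorm hp w hw hpos s₁ s' hs') hs₁
  have h2 : dot s' s₂ ≤ 1 := le_trans (dot_le_dualNorm hp w hw hpos s₂ s' hs') hs₂
  have key : dot s' (a • s₁ + b • s₂) = a * dot s' s₁ + b * dot s' s₂ := by
    simp only [dot, Pi.add_apply, Pi.smul_apply, smul_eq_mul, Finset.mul_sum,
      ← Finset.sum_add_distrib]
    exact Finset.sum_congr rfl fun i _ => by ring
  rw [key]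
  nlinarith

lemma V_finite (w : Fin p → ℝ) :
    Set.Finite {v : Fin p → ℝ | ∃ (σ : Fin p → ℝ) (π : Equiv.Perm (Fin p)),
      (∀ j, σ j = 1 ∨ σ j = -1) ∧ v = fun j => σ j * w (π j)} := by
  have hS : (Set.pi Set.univ (fun _ : Fin p => ({1, -1} : Set ℝ))).Finite :=
    Set.Finite.pi fun _ => (Set.finite_singleton _).insert _
  have hT : ((Set.pi Set.univ (fun _ : Fin p => ({1, -1} : Set ℝ))) ×ˢ
      (Set.univ : Set (Equiv.Perm (Fin p)))).Finite := hS.prod Set.finite_univ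
  refine Set.Finite.subset (hT.image
    (fun q : (Fin p → ℝ) × Equiv.Perm (Fin p) => fun j => q.1 j * w (q.2 j))) ?_
  rintro v ⟨σ, π, hσ, rfl⟩
  exact ⟨(σ, π), ⟨fun j _ => by rcases hσ j with h | h <;> simp [h], Set.mem_univ _⟩, rfl⟩

end aux

theorem slope_dual_ball_eq_sign_permutahedron {p : ℕ} (hp : 0 < p) (w : Fin p → ℝ)
    (hmono : ∀ i j : Fin p, i ≤ j → w j ≤ w i) (hnonneg : ∀ i, 0 ≤ w i)
    (hpos : 0 < w ⟨0, hp⟩) :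
    {s : Fin p → ℝ | dualNorm (slopeNorm w) s ≤ 1} = signPermutahedron w := by
  set V : Set (Fin p → ℝ) := {v | ∃ (σ : Fin p → ℝ) (π : Equiv.Perm (Fin p)),
    (∀ j, σ j = 1 ∨ σ j = -1) ∧ v = fun j => σ j * w (π j)} with hV
  ext s
  constructor
  · intro hs
    by_contra hns
    have hclosed : IsClosed (convexHull ℝ V) := ((V_finite w).isCompact_convexHull (𝕜 := ℝ)).isClosed
    have hns' : s ∉ convexHull ℝ V := hns
    obtain ⟨f, u, hfu, hus⟩ :=
      geometric_hahn_banach_closed_point (convex_convexHull ℝ V) hclosed hns'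
    set x : Fin p → ℝ := fun j => f (fun k => if j = k then 1 else 0) with hxdef
    have hfa : ∀ a : Fin p → ℝ, f a = dot x a := by
      intro a
      conv_lhs => rw [pi_eq_sum_univ a]
      rw [map_sum]
      simp only [_root_.map_smul, smul_eq_mul]
      exact Finset.sum_congr rfl fun i _ => mul_comm _ _
    have hterm : ∀ π : Equiv.Perm (Fin p), ∑ j, w j * |x (π j)| ≤ u := by
      intro π
      set σ : Fin p → ℝ := fun j => if 0 ≤ x j then 1 else -1 with hσdef
      have hσ : ∀ j, σ j = 1 ∨ σ j = -1 := fun j => by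
        by_cases h : 0 ≤ x j <;> simp [hσdef, h]
      have hv : (fun j => σ j * w (π⁻¹ j)) ∈ V := ⟨σ, π⁻¹, hσ, rfl⟩
      have hlt := hfu _ (subset_convexHull ℝ V hv)
      have heq : f (fun j => σ j * w (π⁻¹ j)) = ∑ j, w j * |x (π j)| := by
        rw [hfa]
        have h1 : ∀ j, x j * σ j = |x j| := by
          intro j
          by_cases h : 0 ≤ x j
          · simp [hσdef, h, abs_of_nonneg h]
          · simp [hσdef, h, abs_of_neg (lt_of_not_ge h)]
        calc dot x (fun j => σ j * w (π⁻¹ j)) = ∑ j, |x j| * w (π⁻¹ j) :=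
              Finset.sum_congr rfl fun j _ => by rw [← mul_assoc, h1 j]
          _ = ∑ j, w j * |x (π j)| :=
              Fintype.sum_equiv π⁻¹ _ _ (fun j => by simp [mul_comm])
      linarith [heq ▸ hlt]
    have hcu : slopeNorm w x ≤ u := ciSup_le hterm
    have hxs : u < dot x s := hfa s ▸ hus
    have hnn : 0 ≤ slopeNorm w x := slopeNorm_nonneg w hnonneg x
    by_cases hc : slopeNorm w x = 0
    · have hx0 : ∀ i, x i = 0 := by
        intro i
        have h1 : w ⟨0, hp⟩ * |x i| ≤ 0 := hc ▸ w0_abs_le hp w hnonneg x i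
        have h2 : |x i| ≤ 0 := by nlinarith [abs_nonneg (x i)]
        exact abs_eq_zero.mp (le_antisymm h2 (abs_nonneg _))
      have : dot x s = 0 := by simp [dot, hx0]
      rw [this] at hxs
      linarith
    · have hcpos : 0 < slopeNorm w x := lt_of_le_of_ne hnn (Ne.symm hc)
      have hx' : slopeNorm w ((slopeNorm w x)⁻¹ • x) ≤ 1 := by
        refine ciSup_le fun π => ?_
        have heq : ∑ j, w j * |((slopeNorm w x)⁻¹ • x) (π j)| =
            (slopeNorm w x)⁻¹ * ∑ j, w j * |x (π j)| := by
          rw [Finset.mul_sum]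
          refine Finset.sum_congr rfl fun j _ => ?_
          simp [abs_mul, abs_of_nonneg (inv_nonneg.mpr hcpos.le)]
          ring
        rw [heq]
        calc (slopeNorm w x)⁻¹ * ∑ j, w j * |x (π j)| ≤
              (slopeNorm w x)⁻¹ * slopeNorm w x :=
              mul_le_mul_of_nonneg_left (slope_term_le w x π) (inv_nonneg.mpr hcpos.le)
          _ = 1 := inv_mul_cancel₀ (ne_of_gt hcpos)
      have hle : dot ((slopeNorm w x)⁻¹ • x) s ≤ 1 :=
        le_trans (dot_le_dualNorm hp w hnonneg hpos s _ hx') hs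
      have heq2 : dot ((slopeNorm w x)⁻¹ • x) s = (slopeNorm w x)⁻¹ * dot x s := by
        simp [dot, Finset.mul_sum, mul_assoc]
      rw [heq2] at hle
      have : dot x s ≤ slopeNorm w x := by
        have h3 := mul_le_mul_of_nonneg_left hle hcpos.le
        rw [← mul_assoc, mul_inv_cancel₀ (ne_of_gt hcpos), one_mul, mul_one] at h3
        exact h3
      linarith
  · intro hs
    exact convexHull_min (fun v hv => by
      obtain ⟨σ, π, hσ, rfl⟩ := hv
      exact vertex_mem_ball w hnonneg σ π hσ) (ball_convex hp w hnonneg hpos) hs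
end

section
/- Let w₁ > ⋯ > w_p > 0 and let x ∈ ℝ^p satisfy x₁ = ⋯ = x_p > 0. Then the subdifferential of the SLOPE norm ‖·‖_w at x equals the permutahedron P_w = conv{(w_{π(1)},…,w_{π(p)}) : π a permutation of [p]}. -/
open Finset Matrix

/-- The permutahedron `P_w`. -/
noncomputable def permutahedron {p : ℕ} (w : Fin p → ℝ) : Set (Fin p → ℝ) :=
  convexHull ℝ {v | ∃ π : Equiv.Perm (Fin p), v = fun j => w (π j)}

lemma slopeNorm_const {p : ℕ} (w : Fin p → ℝ) (x : Fin p → ℝ)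
    (hconst : ∀ i j, x i = x j) (hxpos : ∀ i, 0 < x i) :
    slopeNorm w x = ∑ j, w j * x j := by
  have h : ∀ π : Equiv.Perm (Fin p), ∑ j, w j * |x (π j)| = ∑ j, w j * x j := by
    intro π
    refine Finset.sum_congr rfl fun j _ => ?_
    rw [abs_of_pos (hxpos _), hconst (π j) j]
  unfold slopeNorm
  rw [show (fun π : Equiv.Perm (Fin p) => ∑ j, w j * |x (π j)|)
      = fun _ => ∑ j, w j * x j from funext h, ciSup_const]

lemma bdd_slope {p : ℕ} (w z : Fin p → ℝ) :
    BddAbove (Set.range fun π : Equiv.Perm (Fin p) => ∑ j, w j * |z (π j)|) :=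
  (Set.finite_range _).bddAbove

theorem slope_subdiff_const_eq_permutahedron {p : ℕ} (w : Fin p → ℝ)
    (hstrict : ∀ i j : Fin p, i < j → w j < w i) (hpos : ∀ i, 0 < w i)
    (x : Fin p → ℝ) (hconst : ∀ i j, x i = x j) (hxpos : ∀ i, 0 < x i) :
    subdiff (slopeNorm w) x = permutahedron w := by
  classical
  have hNx : slopeNorm w x = ∑ j, w j * x j := slopeNorm_const w x hconst hxpos
  apply Set.Subset.antisymm
  · -- subdiff ⊆ permutahedron
    intro s hs
    rcases eq_or_ne p 0 with hp | hp
    · subst hp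
      exact subset_convexHull ℝ _ ⟨1, funext fun j => j.elim0⟩
    have i0 : Fin p := ⟨0, Nat.pos_of_ne_zero hp⟩
    by_contra hsn
    have hfin : Set.Finite {v : Fin p → ℝ | ∃ π : Equiv.Perm (Fin p), v = fun j => w (π j)} := by
      have : {v : Fin p → ℝ | ∃ π : Equiv.Perm (Fin p), v = fun j => w (π j)}
          = Set.range (fun π : Equiv.Perm (Fin p) => fun j => w (π j)) := by
        ext v; simp [Set.mem_setOf_eq, eq_comm]
      rw [this]; exact Set.finite_range _
    have hK : Convex ℝ (permutahedron w) := convex_convexHull ℝ _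
    have hcl : IsClosed (permutahedron w) := hfin.isClosed_convexHull ℝ
    obtain ⟨f, u, hfu, hus⟩ := geometric_hahn_banach_closed_point hK hcl hsn
    set c : Fin p → ℝ := fun i => f (Pi.single i 1) with hc
    have hfc : ∀ z : Fin p → ℝ, f z = ∑ i, z i * c i := by
      intro z
      have hz : z = ∑ i, Pi.single i (z i) := (Finset.univ_sum_single z).symm
      conv_lhs => rw [hz]
      rw [map_sum]
      refine Finset.sum_congr rfl fun i _ => ?_
      have h1 : Pi.single i (z i) = z i • (Pi.single i (1 : ℝ) : Fin p → ℝ) := by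
        funext j
        by_cases h : j = i <;> simp [Pi.single_apply, h]
      rw [h1, _root_.map_smul, smul_eq_mul]
    -- choose maximizing permutation for c
    obtain ⟨π₀, hπ₀⟩ := Finite.exists_max (fun π : Equiv.Perm (Fin p) => ∑ j, w j * c (π j))
    -- small step size
    set D : ℝ := 1 + ∑ i, |c i| with hD
    have hDpos : (0 : ℝ) < D := by
      have : (0 : ℝ) ≤ ∑ i, |c i| := Finset.sum_nonneg fun i _ => abs_nonneg _
      linarith
    set t : ℝ := x i0 / D with ht
    have htpos : 0 < t := div_pos (hxpos i0) hDpos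
    have hzpos : ∀ i, 0 < x i + t * c i := by
      intro i
      have hci : |c i| < D := by
        have h1 : |c i| ≤ ∑ i, |c i| :=
          Finset.single_le_sum (f := fun i => |c i|) (fun i _ => abs_nonneg _) (Finset.mem_univ i)
        linarith
      have h2 : t * |c i| < x i0 := by
        rw [ht, div_mul_eq_mul_div, div_lt_iff₀ hDpos]
        have := hxpos i0
        nlinarith
      have h3 : -(t * |c i|) ≤ t * c i := by
        have := neg_abs_le (c i)
        nlinarith
      have h4 : x i = x i0 := hconst i i0
      linarith
    -- compute slopeNorm at x + t • c
    set z : Fin p → ℝ := x + t • c with hzdef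
    have hterm : ∀ π : Equiv.Perm (Fin p),
        ∑ j, w j * |z (π j)| = (∑ j, w j * x j) + t * ∑ j, w j * c (π j) := by
      intro π
      have : ∀ j : Fin p, w j * |z (π j)| = w j * x (π j) + t * (w j * c (π j)) := by
        intro j
        have : z (π j) = x (π j) + t * c (π j) := by simp [hzdef]
        rw [this, abs_of_pos (hzpos (π j))]
        ring
      rw [Finset.sum_congr rfl (fun j _ => this j), Finset.sum_add_distrib, ← Finset.mul_sum]
      congr 1
      refine Finset.sum_congr rfl fun j _ => ?_
      rw [hconst (π j) j]
    have hNz_le : slopeNorm w z ≤ (∑ j, w j * x j) + t * ∑ j, w j * c (π₀ j) := by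
      apply ciSup_le
      intro π
      rw [hterm π]
      have h := hπ₀ π
      nlinarith [htpos.le]
    have hdx : dot s (z - x) = t * ∑ i, s i * c i := by
      have hz' : z - x = t • c := by rw [hzdef]; abel
      rw [hz', dot, Finset.mul_sum]
      refine Finset.sum_congr rfl fun i _ => ?_
      simp [Pi.smul_apply]
      ring
    have hkey : ∑ i, s i * c i ≤ ∑ j, w j * c (π₀ j) := by
      have h := hs z
      rw [hNx, hdx] at h
      have h2 : t * (∑ i, s i * c i) ≤ t * (∑ j, w j * c (π₀ j)) := by linarith
      exact le_of_mul_le_mul_left h2 htpos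
    have hv : f (fun j => w (π₀.symm j)) = ∑ j, w j * c (π₀ j) := by
      rw [hfc]
      rw [← Equiv.sum_comp π₀ (fun i => w (π₀.symm i) * c i)]
      simp
    have hvK : (fun j => w (π₀.symm j)) ∈ permutahedron w :=
      subset_convexHull ℝ _ ⟨π₀.symm, rfl⟩
    have hlt := hfu _ hvK
    have hfs : f s = ∑ i, s i * c i := hfc s
    linarith
  · -- permutahedron ⊆ subdiff
    apply convexHull_min
    · rintro v ⟨π, rfl⟩ z
      have h1 : dot (fun j => w (π j)) x = ∑ j, w j * x j := by
        have : ∀ j, w (π j) * x j = w (π j) * x (π j) := fun j => by rw [hconst j (π j)]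
        rw [dot]
        simp_rw [this]
        exact Equiv.sum_comp π (fun k => w k * x k)
      have h2 : dot (fun j => w (π j)) z ≤ slopeNorm w z := by
        have step1 : dot (fun j => w (π j)) z = ∑ k, w k * z (π.symm k) := by
          rw [dot]
          rw [← Equiv.sum_comp π (fun k => w k * z (π.symm k))]
          simp
        have step2 : ∑ k, w k * z (π.symm k) ≤ ∑ k, w k * |z (π.symm k)| := by
          refine Finset.sum_le_sum fun k _ => ?_
          exact mul_le_mul_of_nonneg_left (le_abs_self _) (hpos k).le
        have step3 : ∑ k, w k * |z (π.symm k)| ≤ slopeNorm w z :=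
          le_ciSup (bdd_slope w z) π.symm
        linarith [step1, step2, step3]
      have hd : dot (fun j => w (π j)) (z - x)
          = dot (fun j => w (π j)) z - dot (fun j => w (π j)) x := by
        simp [dot, sub_mul, mul_sub, Finset.sum_sub_distrib]
      rw [hNx, hd, h1]
      linarith
    · -- convexity of subdiff
      intro s1 hs1 s2 hs2 a b ha hb hab
      intro z
      have e : dot (a • s1 + b • s2) (z - x) = a * dot s1 (z - x) + b * dot s2 (z - x) := by
        simp [dot, add_mul, Finset.sum_add_distrib, Finset.mul_sum, mul_assoc]
      rw [e]
      have h1 := hs1 z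
      have h2 := hs2 z
      have key := add_le_add (mul_le_mul_of_nonneg_left h1 ha) (mul_le_mul_of_nonneg_left h2 hb)
      have e2 : a * slopeNorm w z + b * slopeNorm w z = slopeNorm w z := by
        rw [← add_mul, hab, one_mul]
      have e3 : a * slopeNorm w x + b * slopeNorm w x = slopeNorm w x := by
        rw [← add_mul, hab, one_mul]
      nlinarith [key, e2, e3]
end
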